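/- arXiv:2506.13383 — 9 statements merged into one kernel-verified Lean document; each statement's English description precedes it below -/
import Mathlib

section
/- For every value v in the finite value set V, the push-pop StacKAT expressions (push v)* · (pop v)* and (push v)* + (pop v)* are semantically equivalent: ⟦(push v)* · (pop v)*⟧ = ⟦(push v)* + (pop v)*⟧ as relations on stacks. -/
/-- Push-pop StacKAT expressions: regular-expression terms over push/pop of values in `V`. -/
inductive Exp (V : Type) : Type
  | zero : Exp V
  | one : Exp V
  | plus : Exp V → Exp V → Exp V
  | seq : Exp V → Exp V → Exp V
  | star : Exp V → Exp V
  | push : V → Exp V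
  | pop : V → Exp V

/-- `n`-fold relational composition of a relation. -/
def relPow {α : Type*} (r : α → α → Prop) : ℕ → α → α → Prop
  | 0 => Eq
  | n + 1 => Relation.Comp r (relPow r n)

/-- The relational semantics of a push-pop StacKAT expression, as a binary relation on stacks. -/
def denote {V : Type} : Exp V → List V → List V → Prop
  | Exp.zero => fun _ _ => False
  | Exp.one => Eq
  | Exp.plus e f => fun s t => denote e s t ∨ denote f s t
  | Exp.seq e f => Relation.Comp (denote e) (denote f)
  | Exp.star e => fun s t => ∃ n, relPow (denote e) n s t
  | Exp.push v => fun s t => t = v :: s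
  | Exp.pop v => fun s t => s = v :: t

lemma pushPow {V : Type} (v : V) (n : ℕ) (s t : List V) :
    relPow (denote (Exp.push v)) n s t ↔ t = List.replicate n v ++ s := by
  induction n generalizing s t with
  | zero => simp [relPow]; exact comm
  | succ n ih =>
    constructor
    · rintro ⟨u, hu, h⟩
      simp only [denote] at hu
      subst hu
      rw [ih] at h
      subst h
      simp [List.replicate_succ']
    · rintro rfl
      exact ⟨v :: s, rfl, by rw [ih]; simp [List.replicate_succ']⟩

lemma popPow {V : Type} (v : V) (n : ℕ) (s t : List V) :
    relPow (denote (Exp.pop v)) n s t ↔ s = List.replicate n v ++ t := by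
  induction n generalizing s t with
  | zero => simp [relPow]
  | succ n ih =>
    constructor
    · rintro ⟨u, hu, h⟩
      simp only [denote] at hu
      rw [ih] at h
      subst h; subst hu
      simp [List.replicate_succ]
    · rintro rfl
      exact ⟨List.replicate n v ++ t, by simp [denote, List.replicate_succ], by rw [ih]⟩

/-- `⟦(push v)* · (pop v)*⟧ = ⟦(push v)* + (pop v)*⟧` as relations on stacks. -/
theorem stmt1 {V : Type} [Fintype V] (v : V) :
    denote (((Exp.push v).star).seq ((Exp.pop v).star)) =
      denote (((Exp.push v).star).plus ((Exp.pop v).star)) := by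
  funext s t
  ext
  constructor
  · rintro ⟨u, ⟨n, hn⟩, ⟨m, hm⟩⟩
    rw [pushPow] at hn
    rw [popPow] at hm
    subst hn
    rcases le_total m n with h | h
    · left
      refine ⟨n - m, (pushPow v _ _ _).2 ?_⟩
      have : List.replicate n v = List.replicate m v ++ List.replicate (n - m) v := by
        rw [← List.replicate_add]; congr 1; omega
      rw [this, List.append_assoc] at hm
      exact (List.append_cancel_left hm).symm
    · right
      refine ⟨m - n, (popPow v _ _ _).2 ?_⟩
      have : List.replicate m v = List.replicate n v ++ List.replicate (m - n) v := by
        rw [← List.replicate_add]; congr 1; omega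
      rw [this, List.append_assoc] at hm
      exact List.append_cancel_left hm
  · rintro (⟨n, hn⟩ | ⟨n, hn⟩)
    · exact ⟨t, ⟨n, hn⟩, ⟨0, rfl⟩⟩
    · exact ⟨s, ⟨0, rfl⟩, ⟨n, hn⟩⟩
end

section
/- For every value v in the finite value set V and all positive natural numbers n, m, letting k = gcd(n, m), the push-pop StacKAT expressions ((push v)ⁿ)* · ((pop v)ᵐ)* and ((push v)ᵏ)* + ((pop v)ᵏ)* are semantically equivalent: ⟦((push v)ⁿ)* · ((pop v)ᵐ)*⟧ = ⟦((push v)ᵏ)* + ((pop v)ᵏ)*⟧ as relations on stacks, where eⁿ denotes the n-fold sequential composition e · e ⋯ e. -/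
/-- `n`-fold sequential composition `e · e ⋯ e` (with `e⁰ = 1`). -/
def expPow {V : Type} (e : Exp V) : ℕ → Exp V
  | 0 => Exp.one
  | n + 1 => e.seq (expPow e n)

lemma rep_cons {V : Type} (v : V) (n : ℕ) (s : List V) :
    List.replicate n v ++ v :: s = v :: (List.replicate n v ++ s) := by
  induction n with
  | zero => rfl
  | succ n ih => simp [List.replicate_succ, ih]

lemma denote_expPow_push {V : Type} (v : V) (n : ℕ) (s t : List V) :
    denote (expPow (Exp.push v) n) s t ↔ t = List.replicate n v ++ s := by
  induction n generalizing s t with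
  | zero => simp [expPow, denote, eq_comm]
  | succ n ih =>
    simp only [expPow, denote, Relation.Comp, ih, List.replicate_succ]
    constructor
    · rintro ⟨u, rfl, rfl⟩; exact rep_cons v n s
    · rintro rfl; exact ⟨v :: s, rfl, (rep_cons v n s).symm⟩

lemma denote_expPow_pop {V : Type} (v : V) (n : ℕ) (s t : List V) :
    denote (expPow (Exp.pop v) n) s t ↔ s = List.replicate n v ++ t := by
  induction n generalizing s t with
  | zero => simp [expPow, denote]
  | succ n ih =>
    simp only [expPow, denote, Relation.Comp, ih]
    constructor
    · rintro ⟨u, rfl, rfl⟩; simp [List.replicate_succ]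
    · rintro rfl; exact ⟨List.replicate n v ++ t, by simp [List.replicate_succ], rfl⟩

lemma relPow_push {V : Type} (v : V) (n a : ℕ) (s t : List V) :
    relPow (denote (expPow (Exp.push v) n)) a s t ↔ t = List.replicate (a * n) v ++ s := by
  induction a generalizing s t with
  | zero => simp [relPow, eq_comm]
  | succ a ih =>
    simp only [relPow, Relation.Comp, denote_expPow_push, ih]
    constructor
    · rintro ⟨u, rfl, rfl⟩
      rw [← List.append_assoc, ← List.replicate_add]; ring_nf
    · rintro rfl
      exact ⟨List.replicate n v ++ s, rfl, by rw [← List.append_assoc, ← List.replicate_add]; ring_nf⟩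

lemma relPow_pop {V : Type} (v : V) (n a : ℕ) (s t : List V) :
    relPow (denote (expPow (Exp.pop v) n)) a s t ↔ s = List.replicate (a * n) v ++ t := by
  induction a generalizing s t with
  | zero => simp [relPow]
  | succ a ih =>
    simp only [relPow, Relation.Comp, denote_expPow_pop, ih]
    constructor
    · rintro ⟨u, rfl, rfl⟩
      rw [← List.append_assoc, ← List.replicate_add]; ring_nf
    · rintro rfl
      exact ⟨List.replicate (a*n) v ++ t, by rw [← List.append_assoc, ← List.replicate_add]; ring_nf, rfl⟩

lemma exists_comb (n m c : ℕ) (hn : 0 < n) (hm : 0 < m) :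
    ∃ a b : ℕ, a * n = b * m + c * Nat.gcd n m := by
  have h := Nat.gcd_eq_gcd_ab n m
  set A := Nat.gcdA n m
  set B := Nat.gcdB n m
  set N : ℕ := c * (A.natAbs + B.natAbs)
  have hA : (A.natAbs : ℤ) ≥ A := Int.le_natAbs
  have hB : (B.natAbs : ℤ) ≥ B := Int.le_natAbs
  have hA' : (A.natAbs : ℤ) ≥ -A := by
    have := Int.natAbs_neg A ▸ (Int.le_natAbs (a := -A)); omega
  have hB' : (B.natAbs : ℤ) ≥ -B := by
    have := Int.natAbs_neg B ▸ (Int.le_natAbs (a := -B)); omega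
  refine ⟨((c : ℤ) * A + m * N).toNat, ((n : ℤ) * N - c * B).toNat, ?_⟩
  have hNA : (N : ℤ) ≥ c * A.natAbs := by
    push_cast [N]; nlinarith [mul_nonneg (Int.natCast_nonneg c) (abs_nonneg B)]
  have hNB : (N : ℤ) ≥ c * B.natAbs := by
    push_cast [N]; nlinarith [mul_nonneg (Int.natCast_nonneg c) (abs_nonneg A)]
  have h1 : (0 : ℤ) ≤ (c : ℤ) * A + m * N := by
    have hmN : (m : ℤ) * N ≥ N := by nlinarith [Int.natCast_nonneg N, (by exact_mod_cast hm : (1:ℤ) ≤ m)]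
    nlinarith [Int.natCast_nonneg c]
  have h2 : (0 : ℤ) ≤ (n : ℤ) * N - c * B := by
    have hnN : (n : ℤ) * N ≥ N := by nlinarith [Int.natCast_nonneg N, (by exact_mod_cast hn : (1:ℤ) ≤ n)]
    nlinarith [Int.natCast_nonneg c]
  have key : ((c : ℤ) * A + m * N) * n = ((n : ℤ) * N - c * B) * m + c * Nat.gcd n m := by
    rw [h]; ring
  have hcast : ((((c : ℤ) * A + m * N).toNat * n : ℕ) : ℤ)
      = ((((n : ℤ) * N - c * B).toNat * m + c * Nat.gcd n m : ℕ) : ℤ) := by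
    push_cast [Int.toNat_of_nonneg h1, Int.toNat_of_nonneg h2]
    linarith [key]
  exact_mod_cast hcast
/-- For positive `n, m` and `k = gcd(n, m)`:
`⟦((push v)ⁿ)* · ((pop v)ᵐ)*⟧ = ⟦((push v)ᵏ)* + ((pop v)ᵏ)*⟧`. -/
theorem stmt2 {V : Type} [Fintype V] (v : V) (n m : ℕ) (hn : 0 < n) (hm : 0 < m) :
    denote (((expPow (Exp.push v) n).star).seq ((expPow (Exp.pop v) m).star)) =
      denote (((expPow (Exp.push v) (Nat.gcd n m)).star).plus
        ((expPow (Exp.pop v) (Nat.gcd n m)).star)) := by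
  funext s t
  apply propext
  simp only [denote, Relation.Comp]
  constructor
  · rintro ⟨u, ⟨a, hpu⟩, ⟨b, hpo⟩⟩
    rw [relPow_push] at hpu
    rw [relPow_pop] at hpo
    rcases le_total (a * n) (b * m) with hle | hle
    · right
      have hsplit : List.replicate (b * m) v
          = List.replicate (a * n) v ++ List.replicate (b * m - a * n) v := by
        rw [← List.replicate_add]; congr 1; omega
      have hs : s = List.replicate (b * m - a * n) v ++ t := by
        apply List.append_cancel_left (as := List.replicate (a * n) v)
        rw [← hpu, hpo, hsplit, List.append_assoc]
      obtain ⟨c, hc⟩ : Nat.gcd n m ∣ b * m - a * n :=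
        Nat.dvd_sub (Dvd.dvd.mul_left (Nat.gcd_dvd_right n m) b)
          (Dvd.dvd.mul_left (Nat.gcd_dvd_left n m) a)
      exact ⟨c, (relPow_pop v _ c s t).mpr (by rw [hs, hc, mul_comm])⟩
    · left
      have hsplit : List.replicate (a * n) v
          = List.replicate (b * m) v ++ List.replicate (a * n - b * m) v := by
        rw [← List.replicate_add]; congr 1; omega
      have ht : t = List.replicate (a * n - b * m) v ++ s := by
        apply List.append_cancel_left (as := List.replicate (b * m) v)
        rw [← hpo, hpu, hsplit, List.append_assoc]
      obtain ⟨c, hc⟩ : Nat.gcd n m ∣ a * n - b * m :=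
        Nat.dvd_sub (Dvd.dvd.mul_left (Nat.gcd_dvd_left n m) a)
          (Dvd.dvd.mul_left (Nat.gcd_dvd_right n m) b)
      exact ⟨c, (relPow_push v _ c s t).mpr (by rw [ht, hc, mul_comm])⟩
  · rintro (⟨c, hc⟩ | ⟨c, hc⟩)
    · rw [relPow_push] at hc
      obtain ⟨a, b, hab⟩ := exists_comb n m c hn hm
      refine ⟨List.replicate (a * n) v ++ s, ⟨a, (relPow_push v n a s _).mpr rfl⟩,
        ⟨b, (relPow_pop v m b _ t).mpr ?_⟩⟩
      rw [hc, ← List.append_assoc, ← List.replicate_add]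
      congr 2
    · rw [relPow_pop] at hc
      obtain ⟨a, b, hab⟩ := exists_comb m n c hm hn
      refine ⟨List.replicate (b * n) v ++ s, ⟨b, (relPow_push v n b s _).mpr rfl⟩,
        ⟨a, (relPow_pop v m a _ t).mpr ?_⟩⟩
      rw [hc, ← List.append_assoc, ← List.replicate_add]
      congr 2
      rw [Nat.gcd_comm n m] at *
      omega
end

section
/- If L is a regular language over the push-pop alphabet Σ = {push v, pop v | v ∈ V}, then the push-pop canonicalization pushpop(L) is also a regular language over Σ. -/
/-- The push-pop alphabet `Σ = {push v, pop v | v ∈ V}`: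
`Sum.inl v` is `push v`, `Sum.inr v` is `pop v`. -/
abbrev Alph (V : Type) : Type := V ⊕ V

/-- The letter `push v`. -/
def pushSym {V : Type} (v : V) : Alph V := Sum.inl v

/-- The letter `pop v`. -/
def popSym {V : Type} (v : V) : Alph V := Sum.inr v

/-- `pushpop(L)`: the least language containing `L` closed under the rule
"if `x · push v · pop v · y ∈ pushpop(L)` then `x · y ∈ pushpop(L)`". -/
inductive PushPop {V : Type} (L : Language (Alph V)) : List (Alph V) → Prop
  | base {x : List (Alph V)} : x ∈ L → PushPop L x
  | step {x y : List (Alph V)} {v : V} :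
      PushPop L (x ++ pushSym v :: popSym v :: y) → PushPop L (x ++ y)

/-- `pushpop(L)` as a language. -/
def pushpopCl {V : Type} (L : Language (Alph V)) : Language (Alph V) := {x | PushPop L x}

/-- `L_{pop*push*}`: words in which no pop occurs after a push, i.e. a block of pops
followed by a block of pushes. -/
def PopsThenPushes {V : Type} : Language (Alph V) :=
  {w | ∃ p q : List V, w = p.map popSym ++ q.map pushSym}

/-- `filter(L) := L ∩ L_{pop*push*}`. -/
def filterL {V : Type} (L : Language (Alph V)) : Language (Alph V) :=
  {w | w ∈ L ∧ w ∈ PopsThenPushes}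

/-- `poppush(L)`: the least language containing `L` closed under the rule
"if `x · y ∈ poppush(L)` with `x` all pops and `y` all pushes, then
`x · pop v · push v · y ∈ poppush(L)` for every `v`". -/
inductive PopPush {V : Type} (L : Language (Alph V)) : List (Alph V) → Prop
  | base {x : List (Alph V)} : x ∈ L → PopPush L x
  | step {p q : List V} {v : V} :
      PopPush L (p.map popSym ++ q.map pushSym) →
      PopPush L (p.map popSym ++ popSym v :: pushSym v :: q.map pushSym)

/-- `poppush(L)` as a language. -/
def poppushCl {V : Type} (L : Language (Alph V)) : Language (Alph V) := {x | PopPush L x}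

/-- The zipped alphabet: pairs whose first component is a pop symbol or `done` (`none`)
and whose second component is a push symbol or `done` (`none`). -/
abbrev ZAlph (V : Type) : Type := Option V × Option V

/-- Zip together a list of pop values (innermost, i.e. last, pop first) with a list of
push values (first push first), padding with `done` (`none`). -/
def zipAux {V : Type} : List V → List V → List (ZAlph V)
  | [], [] => []
  | v :: p, [] => (some v, none) :: zipAux p []
  | [], w :: q => (none, some w) :: zipAux [] q
  | v :: p, w :: q => (some v, some w) :: zipAux p q

/-- Read off the maximal prefix of pop letters, returning the popped values in order
together with the remaining suffix. -/
def takePops {V : Type} : List (Alph V) → List V × List (Alph V)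
  | Sum.inr v :: r => ((takePops r).1.cons v, (takePops r).2)
  | w => ([], w)

/-- If the word consists only of push letters, return their values in order; else `none`. -/
def asPushes {V : Type} : List (Alph V) → Option (List V)
  | [] => some []
  | Sum.inl v :: r => (asPushes r).map (v :: ·)
  | Sum.inr _ :: _ => none

/-- `zip`: the partial function on `Σ*` defined only on words of the form pops-then-pushes,
pairing the last pop with the first push, and so on outwards, padding with `done`. -/
def zipWord {V : Type} (w : List (Alph V)) : Option (List (ZAlph V)) :=
  (asPushes (takePops w).2).map fun q => zipAux (takePops w).1.reverse q

/-- `zip(L) := { zip(x) | x ∈ L, zip(x) defined }`. -/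
def zipLang {V : Type} (L : Language (Alph V)) : Language (ZAlph V) :=
  {z | ∃ w ∈ L, zipWord w = some z}

section Aux
variable {V : Type}

/-- Dyck words over the push-pop alphabet. -/
inductive Dy : List (Alph V) → Prop
  | nil : Dy []
  | cons {v : V} {u w : List (Alph V)} : Dy u → Dy w →
      Dy (pushSym v :: (u ++ popSym v :: w))

lemma Dy.append {a b : List (Alph V)} (ha : Dy a) (hb : Dy b) : Dy (a ++ b) := by
  induction ha with
  | nil => simpa
  | cons hu hw ihu ihw =>
    rw [List.cons_append, List.append_assoc, List.cons_append]
    exact Dy.cons hu (by assumption)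

/-- Reduction: `Red w0 w` means `w` is obtained from `w0` by deleting `push v pop v` factors. -/
inductive Red (w0 : List (Alph V)) : List (Alph V) → Prop
  | refl : Red w0 w0
  | step {x y : List (Alph V)} {v : V} :
      Red w0 (x ++ pushSym v :: popSym v :: y) → Red w0 (x ++ y)

lemma Red.trans {a b c : List (Alph V)} (h1 : Red a b) (h2 : Red b c) : Red a c := by
  induction h2 with
  | refl => exact h1
  | step h ih => exact Red.step ih

lemma Red.ctxl {u v : List (Alph V)} (x0 : List (Alph V)) (h : Red u v) :
    Red (x0 ++ u) (x0 ++ v) := by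
  induction h with
  | refl => exact Red.refl
  | @step x y w h ih =>
    have : x0 ++ (x ++ y) = (x0 ++ x) ++ y := by simp
    rw [this]
    refine Red.step (x := x0 ++ x) (v := w) ?_
    simpa using ih

lemma Red.ctxr {u v : List (Alph V)} (y0 : List (Alph V)) (h : Red u v) :
    Red (u ++ y0) (v ++ y0) := by
  induction h with
  | refl => exact Red.refl
  | @step x y w h ih =>
    have : (x ++ y) ++ y0 = x ++ (y ++ y0) := by simp
    rw [this]
    refine Red.step (x := x) (v := w) ?_
    have : (x ++ pushSym w :: popSym w :: y) ++ y0 = x ++ pushSym w :: popSym w :: (y ++ y0) := by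
      simp
    rwa [this] at ih

lemma Dy.red_nil {d : List (Alph V)} (h : Dy d) : Red d [] := by
  induction h with
  | nil => exact Red.refl
  | @cons v u w hu hw ihu ihw =>
    have h1 : Red (pushSym v :: (u ++ popSym v :: w)) (pushSym v :: popSym v :: w) := by
      have := (ihu.ctxr (popSym v :: w)).ctxl [pushSym v]
      simpa using this
    have h2 : Red (pushSym v :: popSym v :: w) w := by
      have : Red (pushSym v :: popSym v :: w) ([] ++ pushSym v :: popSym v :: w) := by
        simpa using Red.refl
      simpa using Red.step (x := []) this
    exact (h1.trans h2).trans ihw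

lemma pushpop_iff_red {L : Language (Alph V)} {w : List (Alph V)} :
    PushPop L w ↔ ∃ w0 ∈ L, Red w0 w := by
  constructor
  · intro h
    induction h with
    | base h => exact ⟨_, h, Red.refl⟩
    | step h ih =>
      obtain ⟨w0, hw0, hr⟩ := ih
      exact ⟨w0, hw0, hr.step⟩
  · rintro ⟨w0, hw0, hr⟩
    induction hr with
    | refl => exact PushPop.base hw0
    | step h ih => exact PushPop.step ih

/-- `Ins0 w x`: `x` is obtained from `w` by inserting a Dyck word before each letter. -/
inductive Ins0 : List (Alph V) → List (Alph V) → Prop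
  | nil : Ins0 [] []
  | cons {d : List (Alph V)} {a : Alph V} {w w' : List (Alph V)} :
      Dy d → Ins0 w w' → Ins0 (a :: w) (d ++ a :: w')

/-- `Ins w x`: like `Ins0` but also a trailing Dyck word. -/
inductive Ins : List (Alph V) → List (Alph V) → Prop
  | nil {d : List (Alph V)} : Dy d → Ins [] d
  | cons {d : List (Alph V)} {a : Alph V} {w w' : List (Alph V)} :
      Dy d → Ins w w' → Ins (a :: w) (d ++ a :: w')

lemma ins_split {w w' : List (Alph V)} :
    Ins w w' ↔ ∃ x d, Ins0 w x ∧ Dy d ∧ w' = x ++ d := by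
  constructor
  · intro h
    induction h with
    | nil hd => exact ⟨[], _, Ins0.nil, hd, rfl⟩
    | @cons d a w w1 hd h ih =>
      obtain ⟨x, e, hx, he, rfl⟩ := ih
      exact ⟨d ++ a :: x, e, Ins0.cons hd hx, he, by simp⟩
  · rintro ⟨x, d, hx, hd, rfl⟩
    induction hx with
    | nil => exact Ins.nil hd
    | @cons d0 a w w1 hd0 h ih =>
      have : (d0 ++ a :: w1) ++ d = d0 ++ a :: (w1 ++ d) := by simp
      rw [this]
      exact Ins.cons hd0 ih

lemma ins_red {w w' : List (Alph V)} (h : Ins w w') : Red w' w := by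
  induction h with
  | nil hd => exact hd.red_nil
  | @cons d a w w1 hd h ih =>
    have h1 : Red (d ++ a :: w1) (a :: w1) := by
      simpa using hd.red_nil.ctxr (a :: w1)
    have h2 : Red (a :: w1) (a :: w) := by
      simpa using ih.ctxl [a]
    exact h1.trans h2

lemma ins_refl (w : List (Alph V)) : Ins w w := by
  induction w with
  | nil => exact Ins.nil Dy.nil
  | cons a w ih => exact Ins.cons (d := []) Dy.nil ih

lemma ins_prepend {e w2 : List (Alph V)} {y : List (Alph V)} (he : Dy e)
    (h : Ins y w2) : Ins y (e ++ w2) := by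
  cases h with
  | nil hd => exact Ins.nil (he.append hd)
  | @cons d a w w1 hd h =>
    have : e ++ (d ++ a :: w1) = (e ++ d) ++ a :: w1 := by simp
    rw [this]
    exact Ins.cons (he.append hd) h

lemma ins_del {x y w' : List (Alph V)} {v : V}
    (h : Ins (x ++ pushSym v :: popSym v :: y) w') : Ins (x ++ y) w' := by
  induction x generalizing w' with
  | nil =>
    simp only [List.nil_append] at h ⊢
    cases h with
    | @cons d0 a w w1 hd0 h1 =>
      cases h1 with
      | @cons d1 b w2 w3 hd1 h2 =>
        have he : Dy (d0 ++ pushSym v :: (d1 ++ popSym v :: [])) :=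
          hd0.append (Dy.cons hd1 Dy.nil)
        have : d0 ++ pushSym v :: (d1 ++ popSym v :: w3)
            = (d0 ++ pushSym v :: (d1 ++ popSym v :: [])) ++ w3 := by simp
        rw [this]
        exact ins_prepend he h2
  | cons a x ih =>
    cases h with
    | @cons d b w w1 hd h1 =>
      exact Ins.cons hd (ih h1)

lemma red_ins {w0 w : List (Alph V)} (h : Red w0 w) : Ins w w0 := by
  induction h with
  | refl => exact ins_refl w0
  | step h ih => exact ins_del ih

lemma pushpop_iff_ins {L : Language (Alph V)} {w : List (Alph V)} :
    PushPop L w ↔ ∃ w' ∈ L, Ins w w' := by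
  rw [pushpop_iff_red]
  exact ⟨fun ⟨w0, h, hr⟩ => ⟨w0, h, red_ins hr⟩, fun ⟨w0, h, hi⟩ => ⟨w0, h, ins_red hi⟩⟩

end Aux

section NFAPart
variable {V : Type} {σ : Type}

lemma dfa_evalFrom_append (M : DFA (Alph V) σ) (s : σ) (x y : List (Alph V)) :
    M.evalFrom s (x ++ y) = M.evalFrom (M.evalFrom s x) y := by
  simp [DFA.evalFrom, List.foldl_append]

/-- `Esat M p q`: `q` is reachable from `p` by reading some Dyck word. -/
def Esat (M : DFA (Alph V) σ) (p q : σ) : Prop := ∃ d, Dy d ∧ M.evalFrom p d = q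

/-- the saturated NFA -/
def satN (M : DFA (Alph V) σ) : NFA (Alph V) σ where
  step p a := {q | ∃ r, Esat M p r ∧ q = M.step r a}
  start := {M.start}
  accept := {p | ∃ q, Esat M p q ∧ q ∈ M.accept}

lemma nfa_evalFrom_mem_iff (N : NFA (Alph V) σ) (S : Set σ) (w : List (Alph V)) (q : σ) :
    q ∈ N.evalFrom S w ↔ ∃ p ∈ S, q ∈ N.evalFrom {p} w := by
  induction w generalizing S with
  | nil => simp [NFA.evalFrom]
  | cons a w ih =>
    have h1 : N.evalFrom S (a :: w) = N.evalFrom (N.stepSet S a) w := rfl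
    rw [h1, ih]
    constructor
    · rintro ⟨s, hs, hq⟩
      rw [N.mem_stepSet] at hs
      obtain ⟨p, hp, hps⟩ := hs
      refine ⟨p, hp, ?_⟩
      have h2 : N.evalFrom {p} (a :: w) = N.evalFrom (N.stepSet {p} a) w := rfl
      rw [h2, ih]
      exact ⟨s, (N.mem_stepSet ..).2 ⟨p, rfl, hps⟩, hq⟩
    · rintro ⟨p, hp, hq⟩
      have h2 : N.evalFrom {p} (a :: w) = N.evalFrom (N.stepSet {p} a) w := rfl
      rw [h2, ih] at hq
      obtain ⟨s, hs, hq⟩ := hq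
      rw [N.mem_stepSet] at hs
      obtain ⟨p', hp', hps⟩ := hs
      cases hp'
      exact ⟨s, (N.mem_stepSet ..).2 ⟨p, hp, hps⟩, hq⟩

lemma satN_eval (M : DFA (Alph V) σ) (w : List (Alph V)) (p q : σ) :
    q ∈ (satN M).evalFrom {p} w ↔ ∃ x, Ins0 w x ∧ M.evalFrom p x = q := by
  induction w generalizing p with
  | nil =>
    simp only [NFA.evalFrom, List.foldl_nil, Set.mem_singleton_iff]
    constructor
    · rintro rfl; exact ⟨[], Ins0.nil, rfl⟩
    · rintro ⟨x, hx, hq⟩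
      cases hx
      simpa using hq.symm
  | cons a w ih =>
    have h2 : (satN M).evalFrom {p} (a :: w) = (satN M).evalFrom ((satN M).stepSet {p} a) w := rfl
    rw [h2, nfa_evalFrom_mem_iff]
    constructor
    · rintro ⟨s, hs, hq⟩
      rw [(satN M).mem_stepSet] at hs
      obtain ⟨p', hp', hps⟩ := hs
      cases hp'
      obtain ⟨r, ⟨d, hd, hrd⟩, rfl⟩ := hps
      obtain ⟨x, hx, hq⟩ := (ih _).1 hq
      refine ⟨d ++ a :: x, Ins0.cons hd hx, ?_⟩
      rw [dfa_evalFrom_append, hrd]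
      exact hq
    · rintro ⟨x, hx, hq⟩
      cases hx with
      | @cons d a w x' hd hx' =>
        refine ⟨M.step (M.evalFrom p d) a, ?_, ?_⟩
        · rw [(satN M).mem_stepSet]
          exact ⟨p, rfl, ⟨M.evalFrom p d, ⟨d, hd, rfl⟩, rfl⟩⟩
        · rw [ih]
          refine ⟨x', hx', ?_⟩
          rw [dfa_evalFrom_append] at hq
          exact hq

lemma satN_accepts (M : DFA (Alph V) σ) :
    (satN M).accepts = pushpopCl M.accepts := by
  ext w
  rw [NFA.mem_accepts]
  show _ ↔ PushPop M.accepts w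
  rw [pushpop_iff_ins]
  constructor
  · rintro ⟨p, ⟨q, ⟨d, hd, hpd⟩, hacc⟩, hp⟩
    have hp' : p ∈ (satN M).evalFrom {M.start} w := hp
    rw [satN_eval] at hp'
    obtain ⟨x, hx, rfl⟩ := hp'
    refine ⟨x ++ d, ?_, ins_split.2 ⟨x, d, hx, hd, rfl⟩⟩
    rw [DFA.mem_accepts, DFA.eval]
    rwa [dfa_evalFrom_append, hpd]
  · rintro ⟨w', hw', hins⟩
    obtain ⟨x, d, hx, hd, rfl⟩ := ins_split.1 hins
    rw [DFA.mem_accepts, DFA.eval, dfa_evalFrom_append] at hw'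
    refine ⟨M.evalFrom M.start x, ⟨_, ⟨d, hd, rfl⟩, hw'⟩, ?_⟩
    show _ ∈ (satN M).evalFrom {M.start} w
    rw [satN_eval]
    exact ⟨x, hx, rfl⟩

end NFAPart


/-- If `L` is a regular language over the push-pop alphabet, then `pushpop(L)` is regular. -/
theorem stmt3 {V : Type} [Fintype V] [Nonempty V] (L : Language (Alph V))
    (hL : L.IsRegular) : (pushpopCl L).IsRegular := by
  obtain ⟨σ, hσ, M, hM⟩ := hL
  have : Fintype (Set σ) := Fintype.ofFinite _
  exact ⟨Set σ, this, (satN M).toDFA, by rw [NFA.toDFA_correct, satN_accepts, hM]⟩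
end

section
/- For every language L over the push-pop alphabet Σ, zip(poppush(L)) = A* · zip(L), where A = { (pop v, push v) | v ∈ V } is viewed as a set of single letters of the zipped alphabet and · denotes language concatenation. -/
/-- `A = { (pop v, push v) | v ∈ V }`, viewed as a language of single letters of the
zipped alphabet. -/
def Aletters (V : Type) : Language (ZAlph V) :=
  {w | ∃ v : V, w = [((some v : Option V), (some v : Option V))]}

/-!
Zipping pairs the innermost pop with the innermost push, so one step of `poppush`, which inserts
`pop v · push v` at the junction of a pops-then-pushes word, prepends exactly the letter
`(pop v, push v)` to its zip. Hence `zip(poppush(L))` contains `zip(L)` and is closed under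
left multiplication by `A`, giving `A* · zip(L) ⊆ zip(poppush(L))` by the Kleene-algebra star
induction rule; conversely, induction on `poppush` shows every zip of `poppush(L)` is a word of
`A*` followed by a zip of `L`.
-/

section ZipWord
variable {V : Type}

lemma takePops_map_popSym_append_map_pushSym (p q : List V) :
    takePops (p.map popSym ++ q.map pushSym) = (p, q.map pushSym) := by
  induction p with
  | nil => cases q <;> rfl
  | cons v p ih => simp only [List.map_cons, List.cons_append, popSym, takePops, ih]

lemma map_popSym_takePops_append (w : List (Alph V)) :
    (takePops w).1.map popSym ++ (takePops w).2 = w := by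
  induction w with
  | nil => rfl
  | cons a r ih =>
    cases a with
    | inl v => rfl
    | inr v => simpa [takePops, popSym] using ih

lemma asPushes_map_pushSym (q : List V) : asPushes (q.map pushSym) = some q := by
  induction q with
  | nil => rfl
  | cons w q ih => simp [pushSym, asPushes, ih]

lemma eq_map_pushSym_of_asPushes_eq_some :
    ∀ {w : List (Alph V)} {q : List V}, asPushes w = some q → w = q.map pushSym
  | [], q, h => by simp_all [asPushes]
  | Sum.inl v :: r, q, h => by
    obtain ⟨q', hq', rfl⟩ := Option.map_eq_some_iff.1 h
    simp [pushSym, eq_map_pushSym_of_asPushes_eq_some hq']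
  | Sum.inr _ :: _, _, h => by simp [asPushes] at h

lemma zipWord_map_popSym_append_map_pushSym (p q : List V) :
    zipWord (p.map popSym ++ q.map pushSym) = some (zipAux p.reverse q) := by
  simp [zipWord, takePops_map_popSym_append_map_pushSym, asPushes_map_pushSym]

lemma exists_eq_of_zipWord_eq_some {w : List (Alph V)} {z : List (ZAlph V)}
    (h : zipWord w = some z) :
    ∃ p q : List V, w = p.map popSym ++ q.map pushSym ∧ z = zipAux p.reverse q := by
  obtain ⟨q, hq, hz⟩ := Option.map_eq_some_iff.1 h
  refine ⟨(takePops w).1, q, ?_, hz.symm⟩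
  rw [← eq_map_pushSym_of_asPushes_eq_some hq, map_popSym_takePops_append]

lemma zipWord_map_popSym_append_popSym_pushSym (p q : List V) (v : V) :
    zipWord (p.map popSym ++ popSym v :: pushSym v :: q.map pushSym) =
      some ((some v, some v) :: zipAux p.reverse q) := by
  have h : p.map popSym ++ popSym v :: pushSym v :: q.map pushSym =
      (p ++ [v]).map popSym ++ (v :: q).map pushSym := by simp
  rw [h, zipWord_map_popSym_append_map_pushSym]
  simp [zipAux]

end ZipWord

section PopPush
variable {V : Type} (L : Language (Alph V))

lemma le_poppushCl : L ≤ poppushCl L := fun _ ↦ PopPush.base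

lemma zipLang_mono {L M : Language (Alph V)} (h : L ≤ M) : zipLang L ≤ zipLang M :=
  fun _ ⟨w, hw, hz⟩ ↦ ⟨w, h hw, hz⟩

lemma Aletters_mul_zipLang_poppushCl_le :
    Aletters V * zipLang (poppushCl L) ≤ zipLang (poppushCl L) := by
  rintro _ ⟨_, ⟨v, rfl⟩, z, ⟨w, hw, hz⟩, rfl⟩
  obtain ⟨p, q, rfl, rfl⟩ := exists_eq_of_zipWord_eq_some hz
  exact ⟨_, PopPush.step hw, zipWord_map_popSym_append_popSym_pushSym p q v⟩

lemma zipLang_poppushCl_le :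
    zipLang (poppushCl L) ≤ KStar.kstar (Aletters V) * zipLang L := by
  rintro z ⟨w, hw, hz⟩
  induction hw generalizing z with
  | base hx => exact Language.append_mem_mul (Language.nil_mem_kstar _) ⟨_, hx, hz⟩
  | @step p q v _ ih =>
    rw [zipWord_map_popSym_append_popSym_pushSym, Option.some_inj] at hz
    subst hz
    have hA : Aletters V * (KStar.kstar (Aletters V) * zipLang L) ≤
        KStar.kstar (Aletters V) * zipLang L := by
      rw [← mul_assoc]
      exact mul_le_mul_left mul_kstar_le_kstar _
    exact hA (Language.append_mem_mul (show [(some v, some v)] ∈ Aletters V from ⟨v, rfl⟩)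
      (ih (zipWord_map_popSym_append_map_pushSym p q)))

end PopPush

theorem stmt6_general {V : Type} (L : Language (Alph V)) :
    zipLang (poppushCl L) = KStar.kstar (Aletters V) * zipLang L :=
  le_antisymm (zipLang_poppushCl_le L)
    (kstar_mul_le (zipLang_mono (le_poppushCl L)) (Aletters_mul_zipLang_poppushCl_le L))

/-- `zip(poppush(L)) = A* · zip(L)`, where `·` is language concatenation and `A*` is the
Kleene star of `A`. -/
theorem stmt6 {V : Type} [Fintype V] [Nonempty V] (L : Language (Alph V)) :
    zipLang (poppushCl L) = KStar.kstar (Aletters V) * zipLang L :=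
  stmt6_general L
end

section
/- If L is a regular language over the push-pop alphabet Σ, then zip(L) is a regular language over the zipped alphabet of pairs whose first component is a pop symbol or done and whose second component is a push symbol or done. -/
namespace Stmt7Aux

variable {V : Type}

@[simp] lemma zipAux_nil_nil : zipAux ([] : List V) [] = [] := by simp [zipAux]

@[simp] lemma zipAux_cons_nil (v : V) (r : List V) :
    zipAux (v :: r) [] = (some v, none) :: zipAux r [] := by simp [zipAux]

@[simp] lemma zipAux_nil_cons (w : V) (q : List V) :
    zipAux ([] : List V) (w :: q) = (none, some w) :: zipAux [] q := by simp [zipAux]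

@[simp] lemma zipAux_cons_cons (v w : V) (r q : List V) :
    zipAux (v :: r) (w :: q) = (some v, some w) :: zipAux r q := by simp [zipAux]

lemma asPushes_map_pushSym (q : List V) : asPushes (q.map pushSym) = some q := by
  induction q with
  | nil => rfl
  | cons w q ih => simp [asPushes, pushSym, ih]

lemma asPushes_eq_some : ∀ {w : List (Alph V)} {q : List V},
    asPushes w = some q → w = q.map pushSym := by
  intro w
  induction w with
  | nil => intro q h; simp [asPushes] at h; simp [← h]
  | cons x r ih =>
    intro q h
    cases x with
    | inl v =>
      rw [show asPushes (Sum.inl v :: r) = (asPushes r).map (v :: ·) from rfl] at h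
      rw [Option.map_eq_some_iff] at h
      obtain ⟨q', hq', rfl⟩ := h
      simp [ih hq', pushSym]
    | inr v => exact absurd h (by simp [asPushes])

lemma takePops_cons_pop (v : V) (r : List (Alph V)) :
    takePops (popSym v :: r) = (v :: (takePops r).1, (takePops r).2) := rfl

lemma takePops_split (p q : List V) :
    takePops (p.map popSym ++ q.map pushSym) = (p, q.map pushSym) := by
  induction p with
  | nil =>
    cases q with
    | nil => rfl
    | cons w q => rfl
  | cons v p ih =>
    simp only [List.map_cons, List.cons_append, takePops_cons_pop, ih]

lemma takePops_decomp (w : List (Alph V)) :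
    w = (takePops w).1.map popSym ++ (takePops w).2 := by
  induction w with
  | nil => rfl
  | cons x r ih =>
    cases x with
    | inl v => rfl
    | inr v =>
      rw [show (Sum.inr v : Alph V) = popSym v from rfl, takePops_cons_pop]
      simp only [List.map_cons, List.cons_append]
      rw [← ih]

lemma mem_zipLang_iff {L : Language (Alph V)} {z : List (ZAlph V)} :
    z ∈ zipLang L ↔ ∃ r q : List V, z = zipAux r q ∧
      (r.reverse.map popSym ++ q.map pushSym) ∈ L := by
  constructor
  · rintro ⟨w, hwL, hz⟩
    unfold zipWord at hz
    rw [Option.map_eq_some_iff] at hz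
    obtain ⟨q, hq, hzq⟩ := hz
    refine ⟨(takePops w).1.reverse, q, hzq.symm, ?_⟩
    rw [List.reverse_reverse, ← asPushes_eq_some hq, ← takePops_decomp w]
    exact hwL
  · rintro ⟨r, q, rfl, hmem⟩
    refine ⟨r.reverse.map popSym ++ q.map pushSym, hmem, ?_⟩
    unfold zipWord
    rw [takePops_split, asPushes_map_pushSym]
    simp

lemma zipAux_length : ∀ r q : List V, (zipAux r q).length = max r.length q.length
  | [], [] => by simp
  | v :: r, [] => by simp [zipAux_length r []]
  | [], w :: q => by simp [zipAux_length [] q]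
  | v :: r, w :: q => by simp [zipAux_length r q]

lemma zipAux_eq_nil {r q : List V} (h : ([] : List (ZAlph V)) = zipAux r q) :
    r = [] ∧ q = [] := by
  have h2 := congrArg List.length h
  rw [zipAux_length] at h2
  simp only [List.length_nil] at h2
  constructor
  · exact List.length_eq_zero_iff.mp (by omega)
  · exact List.length_eq_zero_iff.mp (by omega)

/-- Paths in an NFA. -/
inductive NPath {α : Type*} {σ : Type*} (M : NFA α σ) : σ → List α → σ → Prop
  | nil (s : σ) : NPath M s [] s
  | cons {s t u : σ} {a : α} {x : List α} :
      t ∈ M.step s a → NPath M t x u → NPath M s (a :: x) u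

lemma npath_nil_iff {α σ : Type*} {M : NFA α σ} {s u : σ} :
    NPath M s [] u ↔ u = s := by
  constructor
  · intro h; cases h; rfl
  · rintro rfl; exact NPath.nil _

lemma npath_cons_iff {α σ : Type*} {M : NFA α σ} {s u : σ} {a : α} {x : List α} :
    NPath M s (a :: x) u ↔ ∃ t ∈ M.step s a, NPath M t x u := by
  constructor
  · intro h; cases h with | cons ht hp => exact ⟨_, ht, hp⟩
  · rintro ⟨t, ht, hp⟩; exact NPath.cons ht hp

lemma mem_evalFrom_iff_npath {α σ : Type*} {M : NFA α σ} :
    ∀ {x : List α} {S : Set σ} {u : σ},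
    u ∈ M.evalFrom S x ↔ ∃ s ∈ S, NPath M s x u := by
  intro x
  induction x with
  | nil => intro S u; simp [npath_nil_iff, NFA.evalFrom]
  | cons a x ih =>
    intro S u
    rw [show M.evalFrom S (a :: x) = M.evalFrom (M.stepSet S a) x from rfl, ih]
    simp only [NFA.mem_stepSet, npath_cons_iff]
    tauto

/-- The NFA recognizing `zipLang` of the language of `M`. In state `(a, b, fp, fq)`,
`a` runs the pop block backwards, `b` runs the push block forwards, and `fp`/`fq`
record whether the pop/push streams are still active. -/
def zipNFA {σ : Type} (M : DFA (Alph V) σ) : NFA (ZAlph V) (σ × σ × Bool × Bool) where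
  step := fun s ℓ =>
    { t | (match ℓ.1 with
           | some v => s.2.2.1 = true ∧ t.2.2.1 = true ∧ M.step t.1 (popSym v) = s.1
           | none => t.2.2.1 = false ∧ t.1 = s.1) ∧
          (match ℓ.2 with
           | some w => s.2.2.2 = true ∧ t.2.2.2 = true ∧ t.2.1 = M.step s.2.1 (pushSym w)
           | none => t.2.2.2 = false ∧ t.2.1 = s.2.1) ∧
          (ℓ.1.isSome ∨ ℓ.2.isSome) }
  start := { s | s.2.1 = s.1 ∧ s.2.2.1 = true ∧ s.2.2.2 = true }
  accept := { s | s.1 = M.start ∧ s.2.1 ∈ M.accept }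

lemma zipNFA_path {σ : Type} (M : DFA (Alph V) σ) :
    ∀ (z : List (ZAlph V)) (a b : σ) (fp fq : Bool) (a0 b0 : σ) (fp0 fq0 : Bool),
    NPath (zipNFA M) (a0, b0, fp0, fq0) z (a, b, fp, fq) ↔
      ∃ r q : List V, z = zipAux r q ∧
        M.evalFrom a (r.reverse.map popSym) = a0 ∧
        M.evalFrom b0 (q.map pushSym) = b ∧
        (r ≠ [] → fp0 = true) ∧ (q ≠ [] → fq0 = true) ∧
        fp = (decide (r.length = z.length) && fp0) ∧
        fq = (decide (q.length = z.length) && fq0) := by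
  intro z
  induction z with
  | nil =>
    intro a b fp fq a0 b0 fp0 fq0
    rw [npath_nil_iff]
    constructor
    · intro h
      rw [Prod.ext_iff, Prod.ext_iff, Prod.ext_iff] at h
      obtain ⟨rfl, rfl, rfl, rfl⟩ := h
      exact ⟨[], [], by simp, rfl, rfl, by simp, by simp, by simp, by simp⟩
    · rintro ⟨r, q, hz, ha, hb, -, -, hfp, hfq⟩
      obtain ⟨rfl, rfl⟩ := zipAux_eq_nil hz
      simp only [List.reverse_nil, List.map_nil, DFA.evalFrom_nil] at ha hb
      simp only [List.length_nil, decide_true, Bool.true_and] at hfp hfq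
      subst ha; subst hb; subst hfp; subst hfq; rfl
  | cons ℓ z ih =>
    obtain ⟨op, oq⟩ := ℓ
    intro a b fp fq a0 b0 fp0 fq0
    rw [npath_cons_iff]
    cases op with
    | some v =>
      cases oq with
      | some w =>
        constructor
        · rintro ⟨⟨a1, b1, fp1, fq1⟩, hstep, hpath⟩
          obtain ⟨⟨hfp0, hfp1, hstA⟩, ⟨hfq0, hfq1, hstB⟩, -⟩ := hstep
          rw [ih] at hpath
          obtain ⟨r', q', rfl, ha, hb, -, -, hfp, hfq⟩ := hpath
          refine ⟨v :: r', w :: q', by simp, ?_, ?_,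
            fun _ => hfp0, fun _ => hfq0, ?_, ?_⟩
          · rw [List.reverse_cons, List.map_append, DFA.evalFrom_of_append, ha]
            exact hstA
          · rw [List.map_cons, show M.evalFrom b0 (pushSym w :: q'.map pushSym)
              = M.evalFrom (M.step b0 (pushSym w)) (q'.map pushSym) from rfl,
              ← show b1 = M.step b0 (pushSym w) from hstB]
            exact hb
          · rw [hfp, show fp1 = true from hfp1, show fp0 = true from hfp0]
            simp only [List.length_cons, Bool.and_true, decide_eq_decide]
            omega
          · rw [hfq, show fq1 = true from hfq1, show fq0 = true from hfq0]
            simp only [List.length_cons, Bool.and_true, decide_eq_decide]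
            omega
        · rintro ⟨r, q, hz, ha, hb, hc1, hc2, hfp, hfq⟩
          rcases r with _ | ⟨v', r'⟩ <;> rcases q with _ | ⟨w', q'⟩ <;>
            simp only [zipAux_nil_nil, zipAux_cons_nil, zipAux_nil_cons, zipAux_cons_cons,
              List.cons.injEq, Prod.mk.injEq, Option.some.injEq,
              reduceCtorEq, false_and, and_false] at hz
          obtain ⟨⟨rfl, rfl⟩, hz'⟩ := hz
          refine ⟨(M.evalFrom a (r'.reverse.map popSym), M.step b0 (pushSym w), true, true),
            ⟨⟨hc1 (List.cons_ne_nil _ _), rfl, ?_⟩,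
             ⟨hc2 (List.cons_ne_nil _ _), rfl, rfl⟩, Or.inl rfl⟩, ?_⟩
          · rw [← ha, List.reverse_cons, List.map_append, DFA.evalFrom_of_append]
            rfl
          · rw [ih]
            refine ⟨r', q', hz', rfl, ?_, fun _ => rfl, fun _ => rfl, ?_, ?_⟩
            · exact hb
            · rw [hfp, hc1 (List.cons_ne_nil _ _)]
              simp only [hz', List.length_cons, Bool.and_true, decide_eq_decide]
              omega
            · rw [hfq, hc2 (List.cons_ne_nil _ _)]
              simp only [hz', List.length_cons, Bool.and_true, decide_eq_decide]
              omega
      | none =>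
        constructor
        · rintro ⟨⟨a1, b1, fp1, fq1⟩, hstep, hpath⟩
          obtain ⟨⟨hfp0, hfp1, hstA⟩, ⟨hfq1, hbeq⟩, -⟩ := hstep
          rw [ih] at hpath
          obtain ⟨r', q', rfl, ha, hb, -, hcq, hfp, hfq⟩ := hpath
          have hq' : q' = [] := by
            by_contra h
            exact absurd ((show fq1 = false from hfq1) ▸ hcq h) (by simp)
          subst hq'
          refine ⟨v :: r', [], by simp, ?_, ?_, fun _ => hfp0, fun h => absurd rfl h, ?_, ?_⟩
          · rw [List.reverse_cons, List.map_append, DFA.evalFrom_of_append, ha]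
            exact hstA
          · rw [← show b1 = b0 from hbeq]
            exact hb
          · rw [hfp, show fp1 = true from hfp1, show fp0 = true from hfp0]
            simp only [List.length_cons, Bool.and_true, decide_eq_decide]
            omega
          · rw [hfq, show fq1 = false from hfq1]
            simp only [List.length_nil, List.length_cons, Bool.and_false]
            rw [decide_eq_false (by omega), Bool.false_and]
        · rintro ⟨r, q, hz, ha, hb, hc1, hc2, hfp, hfq⟩
          rcases r with _ | ⟨v', r'⟩ <;> rcases q with _ | ⟨w', q'⟩ <;>
            simp only [zipAux_nil_nil, zipAux_cons_nil, zipAux_nil_cons, zipAux_cons_cons,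
              List.cons.injEq, Prod.mk.injEq, Option.some.injEq,
              reduceCtorEq, false_and, and_false] at hz
          obtain ⟨⟨rfl, -⟩, hz'⟩ := hz
          refine ⟨(M.evalFrom a (r'.reverse.map popSym), b0, true, false),
            ⟨⟨hc1 (List.cons_ne_nil _ _), rfl, ?_⟩, ⟨rfl, rfl⟩, Or.inl rfl⟩, ?_⟩
          · rw [← ha, List.reverse_cons, List.map_append, DFA.evalFrom_of_append]
            rfl
          · rw [ih]
            refine ⟨r', [], hz', rfl, hb, fun _ => rfl, fun h => absurd rfl h, ?_, ?_⟩
            · rw [hfp, hc1 (List.cons_ne_nil _ _)]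
              simp only [hz', List.length_cons, Bool.and_true, decide_eq_decide]
              omega
            · rw [hfq]
              simp only [hz', List.length_nil, List.length_cons, Bool.and_false]
              rw [decide_eq_false (by omega), Bool.false_and]
    | none =>
      cases oq with
      | some w =>
        constructor
        · rintro ⟨⟨a1, b1, fp1, fq1⟩, hstep, hpath⟩
          obtain ⟨⟨hfp1, haeq⟩, ⟨hfq0, hfq1, hstB⟩, -⟩ := hstep
          rw [ih] at hpath
          obtain ⟨r', q', rfl, ha, hb, hcr, -, hfp, hfq⟩ := hpath
          have hr' : r' = [] := by
            by_contra h
            exact absurd ((show fp1 = false from hfp1) ▸ hcr h) (by simp)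
          subst hr'
          refine ⟨[], w :: q', by simp, ?_, ?_, fun h => absurd rfl h, fun _ => hfq0, ?_, ?_⟩
          · exact (show a1 = a0 from haeq) ▸ ha
          · rw [List.map_cons, show M.evalFrom b0 (pushSym w :: q'.map pushSym)
              = M.evalFrom (M.step b0 (pushSym w)) (q'.map pushSym) from rfl,
              ← show b1 = M.step b0 (pushSym w) from hstB]
            exact hb
          · rw [hfp, show fp1 = false from hfp1]
            simp only [List.length_nil, List.length_cons, Bool.and_false]
            rw [decide_eq_false (by omega), Bool.false_and]
          · rw [hfq, show fq1 = true from hfq1, show fq0 = true from hfq0]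
            simp only [List.length_cons, Bool.and_true, decide_eq_decide]
            omega
        · rintro ⟨r, q, hz, ha, hb, hc1, hc2, hfp, hfq⟩
          rcases r with _ | ⟨v', r'⟩ <;> rcases q with _ | ⟨w', q'⟩ <;>
            simp only [zipAux_nil_nil, zipAux_cons_nil, zipAux_nil_cons, zipAux_cons_cons,
              List.cons.injEq, Prod.mk.injEq, Option.some.injEq,
              reduceCtorEq, false_and, and_false] at hz
          obtain ⟨⟨-, rfl⟩, hz'⟩ := hz
          refine ⟨(a0, M.step b0 (pushSym w), false, true),
            ⟨⟨rfl, rfl⟩, ⟨hc2 (List.cons_ne_nil _ _), rfl, rfl⟩, Or.inr rfl⟩, ?_⟩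
          rw [ih]
          refine ⟨[], q', hz', ha, hb, fun h => absurd rfl h, fun _ => rfl, ?_, ?_⟩
          · rw [hfp]
            simp only [hz', List.length_nil, List.length_cons, Bool.and_false]
            rw [decide_eq_false (by omega), Bool.false_and]
          · rw [hfq, hc2 (List.cons_ne_nil _ _)]
            simp only [hz', List.length_cons, Bool.and_true, decide_eq_decide]
            omega
      | none =>
        constructor
        · rintro ⟨⟨a1, b1, fp1, fq1⟩, hstep, -⟩
          obtain ⟨-, -, h⟩ := hstep
          simp at h
        · rintro ⟨r, q, hz, -⟩
          rcases r with _ | ⟨v', r'⟩ <;> rcases q with _ | ⟨w', q'⟩ <;>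
            simp only [zipAux_nil_nil, zipAux_cons_nil, zipAux_nil_cons, zipAux_cons_cons,
              List.cons.injEq, Prod.mk.injEq, Option.some.injEq,
              reduceCtorEq, false_and, and_false] at hz

lemma zipNFA_accepts {σ : Type} (M : DFA (Alph V) σ) :
    (zipNFA M).accepts = zipLang M.accepts := by
  ext z
  rw [NFA.mem_accepts, mem_zipLang_iff]
  constructor
  · rintro ⟨⟨a, b, fp, fq⟩, hacc, hev⟩
    rw [mem_evalFrom_iff_npath] at hev
    obtain ⟨⟨m, m', fps, fqs⟩, hstart, hpath⟩ := hev
    obtain ⟨hm, hfps, hfqs⟩ := hstart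
    rw [show m' = m from hm, show fps = true from hfps, show fqs = true from hfqs] at hpath
    rw [zipNFA_path] at hpath
    obtain ⟨r, q, rfl, ha, hb, -, -, -, -⟩ := hpath
    obtain ⟨haM, hbM⟩ := hacc
    refine ⟨r, q, rfl, ?_⟩
    rw [DFA.mem_accepts, DFA.eval, DFA.evalFrom_of_append,
      ← show a = M.start from haM, ha, hb]
    exact hbM
  · rintro ⟨r, q, rfl, hw⟩
    refine ⟨(M.start, M.evalFrom M.start (r.reverse.map popSym ++ q.map pushSym),
      decide (r.length = (zipAux r q).length), decide (q.length = (zipAux r q).length)),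
      ⟨rfl, hw⟩, ?_⟩
    rw [mem_evalFrom_iff_npath]
    refine ⟨(M.evalFrom M.start (r.reverse.map popSym),
      M.evalFrom M.start (r.reverse.map popSym), true, true), ⟨rfl, rfl, rfl⟩, ?_⟩
    rw [zipNFA_path]
    exact ⟨r, q, rfl, rfl, (DFA.evalFrom_of_append _ _ _ _).symm,
      fun _ => rfl, fun _ => rfl, by simp, by simp⟩

end Stmt7Aux

/-- If `L` is regular over the push-pop alphabet, then `zip(L)` is regular over the
zipped alphabet. -/
theorem stmt7 {V : Type} [Fintype V] [Nonempty V] (L : Language (Alph V))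
    (hL : L.IsRegular) : (zipLang L).IsRegular := by
  obtain ⟨σ, finσ, M, hM⟩ := hL
  exact ⟨Set (σ × σ × Bool × Bool), inferInstance, (Stmt7Aux.zipNFA M).toDFA,
    by rw [NFA.toDFA_correct, Stmt7Aux.zipNFA_accepts, hM]⟩
end

section
/- For every language L over the push-pop alphabet Σ, the canonicalization does not change the relational semantics: [L] = [overline(L)], where overline(L) := poppush(filter(pushpop(L))). -/
/-- The regular language `L(e) ⊆ Σ*` of a push-pop expression viewed as a regular
expression over the push-pop alphabet. -/
def lang {V : Type} : Exp V → Language (Alph V)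
  | Exp.zero => 0
  | Exp.one => 1
  | Exp.plus e f => lang e + lang f
  | Exp.seq e f => lang e * lang f
  | Exp.star e => KStar.kstar (lang e)
  | Exp.push v => {[pushSym v]}
  | Exp.pop v => {[popSym v]}

/-- The relation on stacks denoted by a single letter. -/
def letterRel {V : Type} : Alph V → List V → List V → Prop
  | Sum.inl v => fun s t => t = v :: s
  | Sum.inr v => fun s t => s = v :: t

/-- The relation on stacks denoted by a word `x ∈ Σ*`: the composition of the letter
relations (`⟦ε⟧` is the identity). -/
def wordRel {V : Type} : List (Alph V) → List V → List V → Prop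
  | [] => Eq
  | a :: x => Relation.Comp (letterRel a) (wordRel x)

/-- `[L] := ⋃_{x ∈ L} ⟦x⟧`: the relational interpretation of a language. -/
def langRel {V : Type} (L : Language (Alph V)) : List V → List V → Prop :=
  fun s t => ∃ x ∈ L, wordRel x s t

/-- `overline(L) := poppush(filter(pushpop(L)))`. -/
def overlineL {V : Type} (L : Language (Alph V)) : Language (Alph V) :=
  poppushCl (filterL (pushpopCl L))

lemma wordRel_append {V : Type} (x y : List (Alph V)) (s t : List V) :
    wordRel (x ++ y) s t ↔ ∃ u, wordRel x s u ∧ wordRel y u t := by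
  induction x generalizing s with
  | nil =>
    constructor
    · intro h; exact ⟨s, rfl, h⟩
    · rintro ⟨u, rfl, h⟩; exact h
  | cons a x ih =>
    simp only [List.cons_append, wordRel, Relation.Comp]
    constructor
    · rintro ⟨u, ha, h⟩
      obtain ⟨w, h1, h2⟩ := (ih u).1 h
      exact ⟨w, ⟨u, ha, h1⟩, h2⟩
    · rintro ⟨w, ⟨u, ha, h1⟩, h2⟩
      exact ⟨u, ha, (ih u).2 ⟨w, h1, h2⟩⟩

lemma ptp_or_decomp {V : Type} : ∀ w : List (Alph V),
    w ∈ PopsThenPushes ∨ ∃ x a b y, w = x ++ Sum.inl a :: Sum.inr b :: y := by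
  intro w
  induction w with
  | nil => left; exact ⟨[], [], rfl⟩
  | cons c r ih =>
    cases c with
    | inl v =>
      rcases ih with h | ⟨x, a, b, y, rfl⟩
      · obtain ⟨p, q, rfl⟩ := h
        cases p with
        | nil => left; exact ⟨[], v :: q, by simp [pushSym]⟩
        | cons b p' =>
          right
          exact ⟨[], v, b, p'.map popSym ++ q.map pushSym, by simp [popSym, pushSym]⟩
      · right; exact ⟨Sum.inl v :: x, a, b, y, rfl⟩
    | inr v =>
      rcases ih with h | ⟨x, a, b, y, rfl⟩
      · obtain ⟨p, q, rfl⟩ := h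
        left; exact ⟨v :: p, q, by simp [popSym]⟩
      · right; exact ⟨Sum.inr v :: x, a, b, y, rfl⟩

lemma reduce_aux {V : Type} (L : Language (Alph V)) :
    ∀ n (w : List (Alph V)), w.length = n → w ∈ pushpopCl L → ∀ s t, wordRel w s t →
      ∃ w' ∈ filterL (pushpopCl L), wordRel w' s t := by
  intro n
  induction n using Nat.strong_induction_on with
  | _ n ih =>
    intro w hn hw s t hst
    rcases ptp_or_decomp w with h | ⟨x, a, b, y, rfl⟩
    · exact ⟨w, ⟨hw, h⟩, hst⟩
    · obtain ⟨u, hx, hrest⟩ := (wordRel_append _ _ _ _).1 hst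
      obtain ⟨u1, h1, u2, h2, hy⟩ := hrest
      -- h1 : u1 = a :: u, h2 : u1 = b :: u2
      rw [h1] at h2
      injection h2 with hb hu
      subst hb; subst hu
      have hw' : x ++ y ∈ pushpopCl L := PushPop.step hw
      have hxy : wordRel (x ++ y) s t := (wordRel_append _ _ _ _).2 ⟨u, hx, hy⟩
      have hlen : (x ++ y).length < n := by
        subst hn
        simp [List.length_append]
      exact ih _ hlen _ rfl hw' s t hxy

lemma pushpop_sound {V : Type} (L : Language (Alph V)) {w : List (Alph V)}
    (h : PushPop L w) : ∀ s t, wordRel w s t → ∃ x ∈ L, wordRel x s t := by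
  induction h with
  | base hx => intro s t hst; exact ⟨_, hx, hst⟩
  | @step x y v _ ih =>
    intro s t hst
    obtain ⟨u, hx, hy⟩ := (wordRel_append _ _ _ _).1 hst
    apply ih s t
    refine (wordRel_append _ _ _ _).2 ⟨u, hx, ?_⟩
    exact ⟨v :: u, rfl, u, rfl, hy⟩

lemma poppush_sound {V : Type} (M : Language (Alph V)) {w : List (Alph V)}
    (h : PopPush M w) : ∀ s t, wordRel w s t → ∃ x ∈ M, wordRel x s t := by
  induction h with
  | base hx => intro s t hst; exact ⟨_, hx, hst⟩
  | @step p q v _ ih =>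
    intro s t hst
    obtain ⟨u, hp, hrest⟩ := (wordRel_append _ _ _ _).1 hst
    obtain ⟨u1, h1, u2, h2, hq⟩ := hrest
    -- h1 : u = v :: u1 (letterRel (popSym v) u u1), h2 : u2 = v :: u1
    apply ih s t
    refine (wordRel_append _ _ _ _).2 ⟨u, hp, ?_⟩
    have : u2 = u := by rw [h2, h1]
    rwa [this] at hq

/-- `[L] = [overline(L)]`: canonicalization does not change the relational semantics. -/
theorem stmt10 {V : Type} [Fintype V] [Nonempty V] (L : Language (Alph V)) :
    langRel L = langRel (overlineL L) := by
  funext s t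
  apply propext
  constructor
  · rintro ⟨x, hx, hst⟩
    obtain ⟨w', hw', hst'⟩ := reduce_aux L x.length x rfl (PushPop.base hx) s t hst
    exact ⟨w', PopPush.base hw', hst'⟩
  · rintro ⟨w, hw, hst⟩
    obtain ⟨x, hx, hst'⟩ := poppush_sound _ hw s t hst
    obtain ⟨y, hy, hst''⟩ := pushpop_sound L hx.1 s t hst'
    exact ⟨y, hy, hst''⟩
end

section
/- For all push-pop StacKAT expressions e and f: ⟦e⟧ = ⟦f⟧ if and only if overline(L(e)) = overline(L(f)), where overline(L) := poppush(filter(pushpop(L))). -/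
/-!
Both sides are equivalent to `[L(e)] = [L(f)]`, since `⟦e⟧ = [L(e)]`. Cancelling `push v · pop v`
preserves the relation of a word, and inserting `pop v · push v` between the pops and the pushes
only shrinks it; conversely a word relating two stacks can be reduced by such cancellations to a
pops-then-pushes word relating them. Hence `pop p · push q` lies in `overline(L)` exactly when
`[L]` relates the stack `p` to the stack `reverse q`, and `overline(L)` encodes `[L]` faithfully.
-/

section

variable {V : Type}

open Relation

theorem wordRel_append_s13 (x y : List (Alph V)) :
    wordRel (x ++ y) = Comp (wordRel x) (wordRel y) := by
  induction x with
  | nil => exact eq_comp.symm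
  | cons a x ih => rw [List.cons_append, wordRel, wordRel, ih, comp_assoc]

theorem wordRel_pops (p s t : List V) : wordRel (p.map popSym) s t ↔ s = p ++ t := by
  induction p generalizing s with
  | nil => exact Iff.rfl
  | cons v p ih => simp [wordRel, Comp, letterRel, popSym, ih]

theorem wordRel_pushes (q s t : List V) :
    wordRel (q.map pushSym) s t ↔ t = q.reverse ++ s := by
  induction q generalizing s with
  | nil => exact eq_comm
  | cons v q ih => simp [wordRel, Comp, letterRel, pushSym, ih]

theorem wordRel_popsPushes (p q s t : List V) :
    wordRel (p.map popSym ++ q.map pushSym) s t ↔ ∃ u, s = p ++ u ∧ t = q.reverse ++ u := by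
  simp [wordRel_append_s13, Comp, wordRel_pops, wordRel_pushes]

theorem wordRel_push_pop (v w : V) (y : List (Alph V)) (s t : List V) :
    wordRel (pushSym v :: popSym w :: y) s t ↔ w = v ∧ wordRel y s t := by
  simp [wordRel, Comp, letterRel, pushSym, popSym, eq_comm]

theorem wordRel_of_wordRel_pop_push (v : V) (y : List (Alph V)) (s t : List V) :
    wordRel (popSym v :: pushSym v :: y) s t → wordRel y s t := by
  rintro ⟨_, h₁, _, h₂, h⟩
  simp_all [letterRel, pushSym, popSym]

theorem wordRel_cancel_push_pop (x y : List (Alph V)) (v : V) :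
    wordRel (x ++ pushSym v :: popSym v :: y) = wordRel (x ++ y) := by
  rw [wordRel_append_s13, wordRel_append_s13]
  congr 1
  funext s t
  simp [wordRel_push_pop]

theorem PushPop.exists_wordRel_eq {L : Language (Alph V)} {w : List (Alph V)}
    (h : PushPop L w) : ∃ x ∈ L, wordRel x = wordRel w := by
  induction h with
  | base hx => exact ⟨_, hx, rfl⟩
  | step _ ih =>
    obtain ⟨x, hxL, hx⟩ := ih
    exact ⟨x, hxL, hx.trans (wordRel_cancel_push_pop ..)⟩

theorem mem_popsThenPushes_or_push_pop (x : List (Alph V)) :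
    x ∈ PopsThenPushes ∨
      ∃ (a b : List (Alph V)) (v w : V), x = a ++ pushSym v :: popSym w :: b := by
  induction x with
  | nil => exact Or.inl ⟨[], [], rfl⟩
  | cons c x ih =>
    rcases ih with ⟨p, q, rfl⟩ | ⟨a, b, v, w, rfl⟩
    · rcases c with u | u
      · cases p with
        | nil => exact Or.inl ⟨[], u :: q, rfl⟩
        | cons w p => exact Or.inr ⟨[], p.map popSym ++ q.map pushSym, u, w, rfl⟩
      · exact Or.inl ⟨u :: p, q, rfl⟩
    · exact Or.inr ⟨c :: a, b, v, w, rfl⟩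

/-- A word relating two stacks has no mismatched pair `push v · pop w`, so cancelling pairs
`push v · pop v` ends in a pops-then-pushes word relating the same stacks. -/
theorem PushPop.exists_mem_filterL {L : Language (Alph V)} {x : List (Alph V)}
    (hx : PushPop L x) {s t : List V} (h : wordRel x s t) :
    ∃ y ∈ filterL (pushpopCl L), wordRel y s t := by
  rcases mem_popsThenPushes_or_push_pop x with hpp | ⟨a, b, v, w, rfl⟩
  · exact ⟨x, ⟨hx, hpp⟩, h⟩
  · rw [wordRel_append_s13] at h
    obtain ⟨m, ha, hvb⟩ := h
    obtain ⟨rfl, hb⟩ := (wordRel_push_pop ..).mp hvb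
    have : (a ++ b).length < (a ++ pushSym w :: popSym w :: b).length := by simp
    exact PushPop.exists_mem_filterL (PushPop.step hx) ((wordRel_append_s13 ..) ▸ ⟨m, ha, hb⟩)
termination_by x.length

theorem langRel_filterL_pushpopCl (L : Language (Alph V)) :
    langRel (filterL (pushpopCl L)) = langRel L := by
  funext s t
  apply propext
  constructor
  · rintro ⟨w, ⟨hw, -⟩, hst⟩
    obtain ⟨x, hxL, hx⟩ := PushPop.exists_wordRel_eq hw
    exact ⟨x, hxL, hx ▸ hst⟩
  · rintro ⟨x, hxL, hst⟩
    exact (PushPop.base hxL).exists_mem_filterL hst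

theorem PopPush.exists_wordRel_le {M : Language (Alph V)} {w : List (Alph V)}
    (h : PopPush M w) : ∃ x ∈ M, ∀ s t, wordRel w s t → wordRel x s t := by
  induction h with
  | base hx => exact ⟨_, hx, fun _ _ => id⟩
  | step _ ih =>
    obtain ⟨x, hxM, hx⟩ := ih
    refine ⟨x, hxM, fun s t hst => hx s t ?_⟩
    rw [wordRel_append_s13] at hst ⊢
    obtain ⟨m, hp, hq⟩ := hst
    exact ⟨m, hp, wordRel_of_wordRel_pop_push _ _ _ _ hq⟩

theorem langRel_poppushCl (M : Language (Alph V)) : langRel (poppushCl M) = langRel M := by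
  funext s t
  apply propext
  constructor
  · rintro ⟨w, hw, hst⟩
    obtain ⟨x, hxM, hx⟩ := PopPush.exists_wordRel_le hw
    exact ⟨x, hxM, hx s t hst⟩
  · exact fun ⟨x, hx, hst⟩ => ⟨x, PopPush.base hx, hst⟩

theorem langRel_overlineL (L : Language (Alph V)) : langRel (overlineL L) = langRel L := by
  rw [overlineL, langRel_poppushCl, langRel_filterL_pushpopCl]

theorem PopPush.mem_popsThenPushes {M : Language (Alph V)} (hM : M ≤ PopsThenPushes)
    {w : List (Alph V)} (h : PopPush M w) : w ∈ PopsThenPushes := by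
  induction h with
  | base hx => exact hM hx
  | @step p q v _ _ => exact ⟨p ++ [v], v :: q, by simp⟩

theorem PopPush.pad {M : Language (Alph V)} (u : List V) {p q : List V}
    (h : PopPush M (p.map popSym ++ q.map pushSym)) :
    PopPush M ((p ++ u).map popSym ++ (u.reverse ++ q).map pushSym) := by
  induction u generalizing p q with
  | nil => simpa using h
  | cons v u ih => simpa using ih (p := p ++ [v]) (q := v :: q) (by simpa using h.step (v := v))

theorem popsPushes_mem_overlineL_iff {L : Language (Alph V)} {p q : List V} :
    p.map popSym ++ q.map pushSym ∈ overlineL L ↔ langRel L p q.reverse := by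
  constructor
  · intro h
    rw [← langRel_overlineL]
    exact ⟨_, h, (wordRel_popsPushes ..).mpr ⟨[], by simp, by simp⟩⟩
  · intro h
    rw [← langRel_filterL_pushpopCl] at h
    obtain ⟨_, ⟨hy, p', q', rfl⟩, hst⟩ := h
    obtain ⟨u, rfl, hq⟩ := (wordRel_popsPushes ..).mp hst
    obtain rfl : q = u.reverse ++ q' := by simpa using congrArg List.reverse hq
    exact (PopPush.base (L := filterL (pushpopCl L)) ⟨hy, p', q', rfl⟩).pad u

theorem mem_overlineL_iff {L : Language (Alph V)} {w : List (Alph V)} :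
    w ∈ overlineL L ↔
      ∃ p q : List V, w = p.map popSym ++ q.map pushSym ∧ langRel L p q.reverse := by
  constructor
  · intro hw
    obtain ⟨p, q, rfl⟩ := PopPush.mem_popsThenPushes (fun _ hx => hx.2) hw
    exact ⟨p, q, rfl, popsPushes_mem_overlineL_iff.mp hw⟩
  · rintro ⟨p, q, rfl, h⟩
    exact popsPushes_mem_overlineL_iff.mpr h

theorem overlineL_eq_iff {L L' : Language (Alph V)} :
    overlineL L = overlineL L' ↔ langRel L = langRel L' := by
  constructor
  · intro h
    funext s t
    have := congrArg (s.map popSym ++ t.reverse.map pushSym ∈ ·) h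
    simpa only [popsPushes_mem_overlineL_iff, List.reverse_reverse] using this
  · intro h
    ext w
    simp only [mem_overlineL_iff, h]

theorem langRel_zero : langRel (0 : Language (Alph V)) = fun _ _ => False := by
  funext s t
  simp [langRel, Language.notMem_zero]

theorem langRel_one : langRel (1 : Language (Alph V)) = Eq := by
  funext s t
  simp [langRel, Language.mem_one, wordRel]

theorem langRel_add (L M : Language (Alph V)) :
    langRel (L + M) = fun s t => langRel L s t ∨ langRel M s t := by
  funext s t
  simp only [langRel, Language.mem_add, or_and_right, exists_or]

theorem langRel_mul (L M : Language (Alph V)) :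
    langRel (L * M) = Comp (langRel L) (langRel M) := by
  funext s t
  apply propext
  simp only [langRel, Language.mem_mul, Comp]
  constructor
  · rintro ⟨_, ⟨x, hx, y, hy, rfl⟩, hst⟩
    obtain ⟨m, hsm, hmt⟩ := (wordRel_append_s13 x y).le _ _ hst
    exact ⟨m, ⟨x, hx, hsm⟩, y, hy, hmt⟩
  · rintro ⟨m, ⟨x, hx, hsm⟩, y, hy, hmt⟩
    exact ⟨x ++ y, ⟨x, hx, y, hy, rfl⟩, (wordRel_append_s13 x y).ge _ _ ⟨m, hsm, hmt⟩⟩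

theorem langRel_pow (L : Language (Alph V)) (n : ℕ) :
    langRel (L ^ n) = relPow (langRel L) n := by
  induction n with
  | zero => rw [pow_zero, langRel_one, relPow]
  | succ n ih => rw [pow_succ', langRel_mul, ih, relPow]

theorem langRel_kstar (L : Language (Alph V)) :
    langRel (KStar.kstar L) = fun s t => ∃ n, relPow (langRel L) n s t := by
  funext s t
  simp only [Language.kstar_eq_iSup_pow, ← langRel_pow, langRel, Language.mem_iSup]
  exact propext
    ⟨fun ⟨x, ⟨n, hx⟩, hst⟩ => ⟨n, x, hx, hst⟩, fun ⟨n, x, hx, hst⟩ => ⟨x, ⟨n, hx⟩, hst⟩⟩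

theorem langRel_singleton (x : List (Alph V)) : langRel {x} = wordRel x := by
  funext s t
  exact propext ⟨fun ⟨_, rfl, hst⟩ => hst, fun hst => ⟨x, rfl, hst⟩⟩

theorem denote_eq_langRel (e : Exp V) : denote e = langRel (lang e) := by
  induction e with
  | zero => exact langRel_zero.symm
  | one => exact langRel_one.symm
  | plus e f ihe ihf => rw [denote, lang, langRel_add, ihe, ihf]
  | seq e f ihe ihf => rw [denote, lang, langRel_mul, ihe, ihf]
  | star e ih => rw [denote, lang, langRel_kstar, ih]
  | push v =>
    rw [lang, langRel_singleton]
    funext s t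
    simp [denote, wordRel, letterRel, pushSym, Comp, eq_comm]
  | pop v =>
    rw [lang, langRel_singleton]
    funext s t
    simp [denote, wordRel, letterRel, popSym, Comp]

end

theorem stmt13_general {V : Type} (e f : Exp V) :
    denote e = denote f ↔ overlineL (lang e) = overlineL (lang f) := by
  rw [denote_eq_langRel, denote_eq_langRel, overlineL_eq_iff]

/-- For push-pop expressions `e` and `f`: `⟦e⟧ = ⟦f⟧` iff
`overline(L(e)) = overline(L(f))`. -/
theorem stmt13 {V : Type} [Fintype V] [Nonempty V] (e f : Exp V) :
    denote e = denote f ↔ overlineL (lang e) = overlineL (lang f) :=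
  stmt13_general e f
end

section
/- For every full StacKAT expression e and all headers α₁, α₂ : F → V, the trace language traces_{α₁}^{α₂}(e) is a regular language over the push-pop alphabet Σ. -/
/-- Full StacKAT expressions: `0 | 1 | e+e | e·e | e* | f=v | f←v | push v | pop v`. -/
inductive FExp (F V : Type) : Type
  | zero : FExp F V
  | one : FExp F V
  | plus : FExp F V → FExp F V → FExp F V
  | seq : FExp F V → FExp F V → FExp F V
  | star : FExp F V → FExp F V
  | test : F → V → FExp F V
  | assign : F → V → FExp F V
  | push : V → FExp F V
  | pop : V → FExp F V

/-- Header-indexed sequential composition of trace-language families: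
`(T₁ ; T₂) α α' = ⋃_β T₁ α β · T₂ β α'`. -/
def seqTr {F V : Type} (T₁ T₂ : (F → V) → (F → V) → Language (Alph V)) :
    (F → V) → (F → V) → Language (Alph V) :=
  fun α α' => {w | ∃ β : F → V, ∃ w₁ ∈ T₁ α β, ∃ w₂ ∈ T₂ β α', w = w₁ ++ w₂}

/-- The trace-language family of the `n`-th power `eⁿ` (`e⁰ = 1`, `eⁿ⁺¹ = eⁿ · e`). -/
def powTr {F V : Type} (T : (F → V) → (F → V) → Language (Alph V)) :
    ℕ → (F → V) → (F → V) → Language (Alph V)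
  | 0 => fun α α' => {w | w = [] ∧ α = α'}
  | n + 1 => seqTr (powTr T n) T

/-- The trace language `traces_{α}^{α'}(e) ⊆ Σ*` of a full StacKAT expression,
for input header `α` and output header `α'`. -/
def traces {F V : Type} [DecidableEq F] : FExp F V → (F → V) → (F → V) → Language (Alph V)
  | FExp.zero => fun _ _ => (0 : Language (Alph V))
  | FExp.one => fun α α' => {w | w = [] ∧ α = α'}
  | FExp.test f v => fun α α' => {w | w = [] ∧ α = α' ∧ α f = v}
  | FExp.assign f v => fun α α' => {w | w = [] ∧ α' = Function.update α f v}
  | FExp.push v => fun α α' => {w | w = [pushSym v] ∧ α = α'}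
  | FExp.pop v => fun α α' => {w | w = [popSym v] ∧ α = α'}
  | FExp.plus e₁ e₂ => fun α α' => traces e₁ α α' + traces e₂ α α'
  | FExp.seq e₁ e₂ => seqTr (traces e₁) (traces e₂)
  | FExp.star e => fun α α' => {w | ∃ n : ℕ, w ∈ powTr (traces e) n α α'}

/-- A packet: a header `α : F → V` together with a stack `s : List V`. -/
abbrev Packet (F V : Type) : Type := (F → V) × List V

/-- The packet semantics of a full StacKAT expression, as a binary relation on packets. -/
def fdenote {F V : Type} [DecidableEq F] : FExp F V → Packet F V → Packet F V → Prop
  | FExp.zero => fun _ _ => False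
  | FExp.one => Eq
  | FExp.plus e f => fun p q => fdenote e p q ∨ fdenote f p q
  | FExp.seq e f => Relation.Comp (fdenote e) (fdenote f)
  | FExp.star e => fun p q => ∃ n, relPow (fdenote e) n p q
  | FExp.test f v => fun p q => q = p ∧ p.1 f = v
  | FExp.assign f v => fun p q => q = (Function.update p.1 f v, p.2)
  | FExp.push v => fun p q => q = (p.1, v :: p.2)
  | FExp.pop v => fun p q => p = (q.1, v :: q.2)

section StmtAux

variable {A : Type} {σ : Type}

/-- Paths in an ε-NFA-style transition relation. -/
inductive EReach (δ : σ → Option A → σ → Prop) : σ → List A → σ → Prop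
  | refl (s : σ) : EReach δ s [] s
  | eps {s u t : σ} {w : List A} : δ s none u → EReach δ u w t → EReach δ s w t
  | cons {s u t : σ} {a : A} {w : List A} :
      δ s (some a) u → EReach δ u w t → EReach δ s (a :: w) t

theorem EReach.trans {δ : σ → Option A → σ → Prop} {s u t : σ} {x y : List A}
    (h₁ : EReach δ s x u) (h₂ : EReach δ u y t) : EReach δ s (x ++ y) t := by
  induction h₁ with
  | refl => simpa using h₂
  | eps h _ ih => exact EReach.eps h (ih h₂)
  | cons h _ ih => exact EReach.cons h (ih h₂)

theorem EReach.split {δ : σ → Option A → σ → Prop} {s t : σ} {w : List A}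
    (h : EReach δ s w t) : ∀ x y, w = x ++ y → ∃ u, EReach δ s x u ∧ EReach δ u y t := by
  induction h with
  | refl s =>
    rintro x y hxy
    obtain ⟨rfl, rfl⟩ := (List.append_eq_nil_iff).mp hxy.symm
    exact ⟨s, EReach.refl s, EReach.refl s⟩
  | eps h _ ih =>
    rintro x y rfl
    obtain ⟨u, h₁, h₂⟩ := ih x y rfl
    exact ⟨u, EReach.eps h h₁, h₂⟩
  | @cons s u t a w h hr ih =>
    rintro x y hxy
    cases x with
    | nil =>
        simp only [List.nil_append] at hxy
        subst hxy
        exact ⟨s, EReach.refl s, EReach.cons h hr⟩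
    | cons b x' =>
      simp only [List.cons_append, List.cons.injEq] at hxy
      obtain ⟨rfl, rfl⟩ := hxy
      obtain ⟨m, h₁, h₂⟩ := ih x' y rfl
      exact ⟨m, EReach.cons h h₁, h₂⟩

theorem eReach_cons_iff {δ : σ → Option A → σ → Prop} {s t : σ} {a : A} {w : List A} :
    EReach δ s (a :: w) t ↔ ∃ u, EReach δ s [a] u ∧ EReach δ u w t := by
  constructor
  · intro h; exact h.split [a] w rfl
  · rintro ⟨u, h₁, h₂⟩; exact h₁.trans h₂

theorem eReach_dead {δ : σ → Option A → σ → Prop} {s t : σ} {w : List A}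
    (hs : ∀ l u, ¬ δ s l u) (h : EReach δ s w t) : w = [] ∧ t = s := by
  cases h with
  | refl => exact ⟨rfl, rfl⟩
  | eps h _ => exact absurd h (hs _ _)
  | cons h _ => exact absurd h (hs _ _)

/-- The master lemma: languages recognized by finite ε-NFAs are regular. -/
theorem isRegular_of_eReach [Fintype σ] (δ : σ → Option A → σ → Prop) (S T : Set σ) :
    Language.IsRegular {w : List A | ∃ s ∈ S, ∃ t ∈ T, EReach δ s w t} := by
  classical
  let M : NFA A σ :=
    { step := fun s a => {u | EReach δ s [a] u}
      start := S
      accept := {u | ∃ t ∈ T, EReach δ u [] t} }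
  have key : ∀ (w : List A) (X : Set σ),
      (∃ u ∈ M.evalFrom X w, u ∈ M.accept) ↔ ∃ s ∈ X, ∃ t ∈ T, EReach δ s w t := by
    intro w
    induction w with
    | nil =>
      intro X
      simp only [NFA.evalFrom_nil]
      exact ⟨fun ⟨u, hu, h⟩ => ⟨u, hu, h⟩, fun ⟨u, hu, h⟩ => ⟨u, hu, h⟩⟩
    | cons a w ih =>
      intro X
      rw [show M.evalFrom X (a :: w) = M.evalFrom (M.stepSet X a) w from rfl, ih]
      constructor
      · rintro ⟨u, hu, t, ht, h⟩
        rw [NFA.mem_stepSet] at hu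
        obtain ⟨s, hs, hstep⟩ := hu
        exact ⟨s, hs, t, ht, hstep.trans h⟩
      · rintro ⟨s, hs, t, ht, h⟩
        obtain ⟨u, h₁, h₂⟩ := eReach_cons_iff.mp h
        refine ⟨u, ?_, t, ht, h₂⟩
        rw [NFA.mem_stepSet]
        exact ⟨s, hs, h₁⟩
  refine ⟨Set σ, inferInstance, M.toDFA, ?_⟩
  ext w
  rw [NFA.toDFA_correct]
  show w ∈ M.accepts ↔ _
  rw [NFA.mem_accepts]
  constructor
  · rintro ⟨u, hu, h⟩; exact (key w S).mp ⟨u, h, hu⟩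
  · intro h; obtain ⟨u, h1, h2⟩ := (key w S).mpr h; exact ⟨u, h2, h1⟩

end StmtAux

section StmtAux2

variable {A : Type} {σ₁ σ₂ : Type}

/-- Glue two transition systems side by side, with ε-edges `E : σ₁ → σ₂` and
`E' : σ₂ → σ₁` between them. -/
def glue (δ₁ : σ₁ → Option A → σ₁ → Prop) (δ₂ : σ₂ → Option A → σ₂ → Prop)
    (E : σ₁ → σ₂ → Prop) (E' : σ₂ → σ₁ → Prop) :
    σ₁ ⊕ σ₂ → Option A → σ₁ ⊕ σ₂ → Prop
  | Sum.inl s, l, Sum.inl t => δ₁ s l t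
  | Sum.inr s, l, Sum.inr t => δ₂ s l t
  | Sum.inl s, l, Sum.inr t => l = none ∧ E s t
  | Sum.inr s, l, Sum.inl t => l = none ∧ E' s t

theorem glue_lift_inl {δ₁ : σ₁ → Option A → σ₁ → Prop} {δ₂ : σ₂ → Option A → σ₂ → Prop}
    {E : σ₁ → σ₂ → Prop} {E' : σ₂ → σ₁ → Prop} {s t : σ₁} {w : List A}
    (h : EReach δ₁ s w t) :
    EReach (glue δ₁ δ₂ E E') (Sum.inl s) w (Sum.inl t) := by
  induction h with
  | refl s => exact EReach.refl _
  | @eps s u t w h _ ih => exact EReach.eps (u := Sum.inl u) h ih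
  | @cons s u t a w h _ ih => exact EReach.cons (u := Sum.inl u) h ih

theorem glue_lift_inr {δ₁ : σ₁ → Option A → σ₁ → Prop} {δ₂ : σ₂ → Option A → σ₂ → Prop}
    {E : σ₁ → σ₂ → Prop} {E' : σ₂ → σ₁ → Prop} {s t : σ₂} {w : List A}
    (h : EReach δ₂ s w t) :
    EReach (glue δ₁ δ₂ E E') (Sum.inr s) w (Sum.inr t) := by
  induction h with
  | refl s => exact EReach.refl _
  | @eps s u t w h _ ih => exact EReach.eps (u := Sum.inr u) h ih
  | @cons s u t a w h _ ih => exact EReach.cons (u := Sum.inr u) h ih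

/-- In the disjoint union (no cross edges), paths from an `inl` state stay in `inl`. -/
theorem glue_bot_inl {δ₁ : σ₁ → Option A → σ₁ → Prop} {δ₂ : σ₂ → Option A → σ₂ → Prop}
    {x y : σ₁ ⊕ σ₂} {w : List A}
    (h : EReach (glue δ₁ δ₂ (fun _ _ => False) (fun _ _ => False)) x w y) :
    ∀ s, x = Sum.inl s → ∃ t, y = Sum.inl t ∧ EReach δ₁ s w t := by
  induction h with
  | refl p => rintro s rfl; exact ⟨s, rfl, EReach.refl s⟩
  | @eps p u q w h _ ih =>
    rintro s rfl
    cases u with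
    | inl u₁ =>
      obtain ⟨t, rfl, ht⟩ := ih u₁ rfl
      exact ⟨t, rfl, EReach.eps h ht⟩
    | inr u₂ => exact absurd h.2 id
  | @cons p u q a w h _ ih =>
    rintro s rfl
    cases u with
    | inl u₁ =>
      obtain ⟨t, rfl, ht⟩ := ih u₁ rfl
      exact ⟨t, rfl, EReach.cons h ht⟩
    | inr u₂ => exact absurd h.2 id

theorem glue_bot_inr {δ₁ : σ₁ → Option A → σ₁ → Prop} {δ₂ : σ₂ → Option A → σ₂ → Prop}
    {x y : σ₁ ⊕ σ₂} {w : List A}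
    (h : EReach (glue δ₁ δ₂ (fun _ _ => False) (fun _ _ => False)) x w y) :
    ∀ s, x = Sum.inr s → ∃ t, y = Sum.inr t ∧ EReach δ₂ s w t := by
  induction h with
  | refl p => rintro s rfl; exact ⟨s, rfl, EReach.refl s⟩
  | @eps p u q w h _ ih =>
    rintro s rfl
    cases u with
    | inr u₂ =>
      obtain ⟨t, rfl, ht⟩ := ih u₂ rfl
      exact ⟨t, rfl, EReach.eps h ht⟩
    | inl u₁ => exact absurd h.2 id
  | @cons p u q a w h _ ih =>
    rintro s rfl
    cases u with
    | inr u₂ =>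
      obtain ⟨t, rfl, ht⟩ := ih u₂ rfl
      exact ⟨t, rfl, EReach.cons h ht⟩
    | inl u₁ => exact absurd h.2 id

/-- Decomposition of paths in the sequential gluing. -/
theorem glue_seq_decomp {δ₁ : σ₁ → Option A → σ₁ → Prop} {δ₂ : σ₂ → Option A → σ₂ → Prop}
    {E : σ₁ → σ₂ → Prop} {x y : σ₁ ⊕ σ₂} {w : List A}
    (h : EReach (glue δ₁ δ₂ E (fun _ _ => False)) x w y) :
    ∀ t₂, y = Sum.inr t₂ →
      (∀ s₂, x = Sum.inr s₂ → EReach δ₂ s₂ w t₂) ∧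
      (∀ s₁, x = Sum.inl s₁ → ∃ w₁ w₂ t₁ s₂, w = w₁ ++ w₂ ∧
        EReach δ₁ s₁ w₁ t₁ ∧ E t₁ s₂ ∧ EReach δ₂ s₂ w₂ t₂) := by
  induction h with
  | refl p =>
    rintro t₂ rfl
    exact ⟨fun s₂ hs => by rw [Sum.inr.injEq] at hs; rw [hs]; exact EReach.refl _,
      fun s₁ hs => by exact absurd hs (by simp)⟩
  | @eps p u q w h _ ih =>
    rintro t₂ rfl
    constructor
    · rintro s₂ rfl
      cases u with
      | inl u₁ => exact absurd h.2 id
      | inr u₂ => exact EReach.eps h (((ih t₂ rfl).1) u₂ rfl)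
    · rintro s₁ rfl
      cases u with
      | inl u₁ =>
        obtain ⟨w₁, w₂, t₁, s₂, rfl, p1, hE, p2⟩ := (ih t₂ rfl).2 u₁ rfl
        exact ⟨w₁, w₂, t₁, s₂, rfl, EReach.eps h p1, hE, p2⟩
      | inr u₂ =>
        exact ⟨[], w, s₁, u₂, rfl, EReach.refl _, h.2, (ih t₂ rfl).1 u₂ rfl⟩
  | @cons p u q a w h _ ih =>
    rintro t₂ rfl
    constructor
    · rintro s₂ rfl
      cases u with
      | inl u₁ => exact absurd h.2 id
      | inr u₂ => exact EReach.cons h (((ih t₂ rfl).1) u₂ rfl)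
    · rintro s₁ rfl
      cases u with
      | inl u₁ =>
        obtain ⟨w₁, w₂, t₁, s₂, rfl, p1, hE, p2⟩ := (ih t₂ rfl).2 u₁ rfl
        exact ⟨a :: w₁, w₂, t₁, s₂, rfl, EReach.cons h p1, hE, p2⟩
      | inr u₂ => exact absurd h.1 (by simp)

/-- Decomposition of paths in the star gluing, with respect to an abstract
iteration predicate `Rel`. -/
theorem glue_star_decomp {H : Type} {δ₁ : σ₁ → Option A → σ₁ → Prop}
    {Sst Aac : H → Set σ₁} {Rel : H → List A → Prop} {h' : H}
    (hrefl : Rel h' [])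
    (hstep : ∀ β γ (w₁ w₂ : List A),
      (∃ s ∈ Sst β, ∃ t ∈ Aac γ, EReach δ₁ s w₁ t) → Rel γ w₂ → Rel β (w₁ ++ w₂))
    {x y : σ₁ ⊕ H} {w : List A}
    (h : EReach (glue δ₁ (fun _ _ _ => False) (fun s β => s ∈ Aac β)
      (fun β t => t ∈ Sst β)) x w y) :
    y = Sum.inr h' →
      (∀ β, x = Sum.inr β → Rel β w) ∧
      (∀ s, x = Sum.inl s → ∃ w₁ w₂ t γ, w = w₁ ++ w₂ ∧
        EReach δ₁ s w₁ t ∧ t ∈ Aac γ ∧ Rel γ w₂) := by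
  induction h with
  | refl p =>
    rintro rfl
    exact ⟨fun β hb => by rw [Sum.inr.injEq] at hb; exact hb ▸ hrefl,
      fun s hs => absurd hs (by simp)⟩
  | @eps p u q w h _ ih =>
    rintro rfl
    constructor
    · rintro β rfl
      cases u with
      | inr u₂ => exact absurd h id
      | inl u₁ =>
        obtain ⟨w₁, w₂, t, γ, rfl, p1, ht, hr⟩ := (ih rfl).2 u₁ rfl
        exact hstep β γ w₁ w₂ ⟨u₁, h.2, t, ht, p1⟩ hr
    · rintro s rfl
      cases u with
      | inl u₁ =>
        obtain ⟨w₁, w₂, t, γ, rfl, p1, ht, hr⟩ := (ih rfl).2 u₁ rfl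
        exact ⟨w₁, w₂, t, γ, rfl, EReach.eps h p1, ht, hr⟩
      | inr u₂ =>
        exact ⟨[], w, s, u₂, rfl, EReach.refl _, h.2, (ih rfl).1 u₂ rfl⟩
  | @cons p u q a w h _ ih =>
    rintro rfl
    constructor
    · rintro β rfl
      cases u with
      | inr u₂ => exact absurd h id
      | inl u₁ => exact absurd h.1 (by simp)
    · rintro s rfl
      cases u with
      | inl u₁ =>
        obtain ⟨w₁, w₂, t, γ, rfl, p1, ht, hr⟩ := (ih rfl).2 u₁ rfl
        exact ⟨a :: w₁, w₂, t, γ, rfl, EReach.cons h p1, ht, hr⟩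
      | inr u₂ => exact absurd h.1 (by simp)

end StmtAux2

section StmtAux3

theorem seqTr_mem {F V : Type} {T₁ T₂ : (F → V) → (F → V) → Language (Alph V)} {α α' : F → V}
    {w : List (Alph V)} :
    w ∈ seqTr T₁ T₂ α α' ↔ ∃ β, ∃ w₁ ∈ T₁ α β, ∃ w₂ ∈ T₂ β α', w = w₁ ++ w₂ :=
  Iff.rfl

theorem powTr_succ' {F V : Type} (T : (F → V) → (F → V) → Language (Alph V)) (n : ℕ) :
    powTr T (n + 1) = seqTr T (powTr T n) := by
  induction n with
  | zero =>
    funext α α'; ext w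
    constructor
    · rintro ⟨β, w₁, ⟨rfl, rfl⟩, w₂, h₂, rfl⟩
      exact ⟨α', _, h₂, [], ⟨rfl, rfl⟩, by simp⟩
    · rintro ⟨β, w₁, h₁, w₂, ⟨rfl, rfl⟩, rfl⟩
      exact ⟨α, [], ⟨rfl, rfl⟩, _, h₁, by simp⟩
  | succ n ih =>
    show seqTr (powTr T (n + 1)) T = seqTr T (seqTr (powTr T n) T)
    rw [ih]
    funext α α'; ext w
    constructor
    · rintro ⟨β, w₁, ⟨γ, u₁, hu₁, u₂, hu₂, rfl⟩, w₂, h₂, rfl⟩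
      exact ⟨γ, u₁, hu₁, u₂ ++ w₂, ⟨β, u₂, hu₂, w₂, h₂, rfl⟩, by simp⟩
    · rintro ⟨γ, u₁, hu₁, w₂, ⟨β, u₂, hu₂, u₃, hu₃, rfl⟩, rfl⟩
      exact ⟨β, u₁ ++ u₂, ⟨γ, u₁, hu₁, u₂, hu₂, rfl⟩, u₃, hu₃, by simp⟩

theorem exists_auto {F V : Type} [Fintype F] [DecidableEq F] [Fintype V]
    (e : FExp F V) :
    ∃ (σ : Type) (_ : Fintype σ) (δ : σ → Option (Alph V) → σ → Prop)
      (S A : (F → V) → Set σ),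
      ∀ (α α' : F → V) (w : List (Alph V)),
        (∃ s ∈ S α, ∃ t ∈ A α', EReach δ s w t) ↔ w ∈ traces e α α' := by
  induction e with
  | zero =>
    refine ⟨PUnit, inferInstance, fun _ _ _ => False, fun _ => ∅, fun _ => ∅, ?_⟩
    intro α α' w
    simp only [traces]
    constructor
    · rintro ⟨s, hs, -⟩; exact absurd hs (Set.notMem_empty s)
    · intro h; exact absurd h (Language.notMem_zero w)
  | one =>
    refine ⟨F → V, inferInstance, fun _ _ _ => False, fun α => {α}, fun α' => {α'}, ?_⟩
    intro α α' w
    simp only [traces]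
    constructor
    · rintro ⟨s, rfl, t, rfl, h⟩
      obtain ⟨hw, ht⟩ := eReach_dead (fun _ _ => id) h
      exact ⟨hw, ht.symm⟩
    · rintro ⟨rfl, rfl⟩
      exact ⟨α, rfl, α, rfl, EReach.refl α⟩
  | test f v =>
    refine ⟨F → V, inferInstance, fun _ _ _ => False,
      fun α => {β | β = α ∧ α f = v}, fun α' => {α'}, ?_⟩
    intro α α' w
    simp only [traces]
    constructor
    · rintro ⟨s, ⟨rfl, hv⟩, t, rfl, h⟩
      obtain ⟨hw, ht⟩ := eReach_dead (fun _ _ => id) h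
      exact ⟨hw, ht.symm, hv⟩
    · rintro ⟨rfl, rfl, hv⟩
      exact ⟨α, ⟨rfl, hv⟩, α, rfl, EReach.refl α⟩
  | assign f v =>
    refine ⟨F → V, inferInstance, fun _ _ _ => False,
      fun α => {Function.update α f v}, fun α' => {α'}, ?_⟩
    intro α α' w
    simp only [traces]
    constructor
    · rintro ⟨s, rfl, t, rfl, h⟩
      obtain ⟨hw, ht⟩ := eReach_dead (fun _ _ => id) h
      exact ⟨hw, ht⟩
    · rintro ⟨rfl, rfl⟩
      exact ⟨_, rfl, _, rfl, EReach.refl _⟩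
  | push v =>
    refine ⟨Bool × (F → V), inferInstance,
      (fun p l q => p.1 = false ∧ q = (true, p.2) ∧ l = some (pushSym v)),
      fun α => {(false, α)}, fun α' => {(true, α')}, ?_⟩
    intro α α' w
    simp only [traces]
    constructor
    · rintro ⟨s, rfl, t, rfl, h⟩
      cases h with
      | eps hstep _ => exact absurd hstep.2.2 (by simp)
      | cons hstep hrest =>
        obtain ⟨-, hu, ha⟩ := hstep
        subst hu
        obtain ⟨rfl, ht⟩ := eReach_dead (by rintro l u ⟨h, -⟩; simp at h) hrest
        obtain ⟨ha⟩ := Option.some.injEq .. ▸ ha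
        constructor
        · simp [ha]
        · exact congrArg Prod.snd ht.symm
    · rintro ⟨rfl, rfl⟩
      exact ⟨(false, α), rfl, (true, α), rfl,
        EReach.cons ⟨rfl, rfl, rfl⟩ (EReach.refl _)⟩
  | pop v =>
    refine ⟨Bool × (F → V), inferInstance,
      (fun p l q => p.1 = false ∧ q = (true, p.2) ∧ l = some (popSym v)),
      fun α => {(false, α)}, fun α' => {(true, α')}, ?_⟩
    intro α α' w
    simp only [traces]
    constructor
    · rintro ⟨s, rfl, t, rfl, h⟩
      cases h with
      | eps hstep _ => exact absurd hstep.2.2 (by simp)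
      | cons hstep hrest =>
        obtain ⟨-, hu, ha⟩ := hstep
        subst hu
        obtain ⟨rfl, ht⟩ := eReach_dead (by rintro l u ⟨h, -⟩; simp at h) hrest
        obtain ⟨ha⟩ := Option.some.injEq .. ▸ ha
        constructor
        · simp [ha]
        · exact congrArg Prod.snd ht.symm
    · rintro ⟨rfl, rfl⟩
      exact ⟨(false, α), rfl, (true, α), rfl,
        EReach.cons ⟨rfl, rfl, rfl⟩ (EReach.refl _)⟩
  | plus e₁ e₂ ih₁ ih₂ =>
    obtain ⟨σ₁, f₁, δ₁, S₁, A₁, h₁⟩ := ih₁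
    obtain ⟨σ₂, f₂, δ₂, S₂, A₂, h₂⟩ := ih₂
    letI := f₁; letI := f₂
    refine ⟨σ₁ ⊕ σ₂, inferInstance,
      glue δ₁ δ₂ (fun _ _ => False) (fun _ _ => False),
      fun α => Sum.inl '' S₁ α ∪ Sum.inr '' S₂ α,
      fun α' => Sum.inl '' A₁ α' ∪ Sum.inr '' A₂ α', ?_⟩
    intro α α' w
    simp only [traces]
    rw [Language.mem_add]
    constructor
    · rintro ⟨x, (⟨s₁, hs₁, rfl⟩ | ⟨s₂, hs₂, rfl⟩), y, hy, h⟩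
      · obtain ⟨t, rfl, ht⟩ := glue_bot_inl h s₁ rfl
        rcases hy with ⟨t₁, ht₁, heq⟩ | ⟨t₂, ht₂, heq⟩
        · rw [Sum.inl.injEq] at heq; subst heq
          exact Or.inl ((h₁ α α' w).mp ⟨s₁, hs₁, t₁, ht₁, ht⟩)
        · exact absurd heq (by simp)
      · obtain ⟨t, rfl, ht⟩ := glue_bot_inr h s₂ rfl
        rcases hy with ⟨t₁, ht₁, heq⟩ | ⟨t₂, ht₂, heq⟩
        · exact absurd heq (by simp)
        · rw [Sum.inr.injEq] at heq; subst heq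
          exact Or.inr ((h₂ α α' w).mp ⟨s₂, hs₂, t₂, ht₂, ht⟩)
    · rintro (hw | hw)
      · obtain ⟨s, hs, t, ht, p⟩ := (h₁ α α' w).mpr hw
        exact ⟨Sum.inl s, Or.inl ⟨s, hs, rfl⟩, Sum.inl t, Or.inl ⟨t, ht, rfl⟩,
          glue_lift_inl p⟩
      · obtain ⟨s, hs, t, ht, p⟩ := (h₂ α α' w).mpr hw
        exact ⟨Sum.inr s, Or.inr ⟨s, hs, rfl⟩, Sum.inr t, Or.inr ⟨t, ht, rfl⟩,
          glue_lift_inr p⟩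
  | seq e₁ e₂ ih₁ ih₂ =>
    obtain ⟨σ₁, f₁, δ₁, S₁, A₁, h₁⟩ := ih₁
    obtain ⟨σ₂, f₂, δ₂, S₂, A₂, h₂⟩ := ih₂
    letI := f₁; letI := f₂
    refine ⟨σ₁ ⊕ σ₂, inferInstance,
      glue δ₁ δ₂ (fun s t => ∃ β, s ∈ A₁ β ∧ t ∈ S₂ β) (fun _ _ => False),
      fun α => Sum.inl '' S₁ α, fun α' => Sum.inr '' A₂ α', ?_⟩
    intro α α' w
    simp only [traces]
    rw [seqTr_mem]
    constructor
    · rintro ⟨x, ⟨s₁, hs₁, rfl⟩, y, ⟨t₂, ht₂, rfl⟩, h⟩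
      obtain ⟨w₁, w₂, t₁, s₂, rfl, p1, ⟨β, hA, hS⟩, p2⟩ :=
        (glue_seq_decomp h t₂ rfl).2 s₁ rfl
      exact ⟨β, w₁, (h₁ α β w₁).mp ⟨s₁, hs₁, t₁, hA, p1⟩,
        w₂, (h₂ β α' w₂).mp ⟨s₂, hS, t₂, ht₂, p2⟩, rfl⟩
    · rintro ⟨β, w₁, hw₁, w₂, hw₂, rfl⟩
      obtain ⟨s₁, hs₁, t₁, ht₁, p1⟩ := (h₁ α β w₁).mpr hw₁
      obtain ⟨s₂, hs₂, t₂, ht₂, p2⟩ := (h₂ β α' w₂).mpr hw₂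
      refine ⟨Sum.inl s₁, ⟨s₁, hs₁, rfl⟩, Sum.inr t₂, ⟨t₂, ht₂, rfl⟩, ?_⟩
      exact (glue_lift_inl p1).trans
        (EReach.eps (u := Sum.inr s₂) ⟨rfl, β, ht₁, hs₂⟩ (glue_lift_inr p2))
  | star e ih =>
    obtain ⟨σ₁, f₁, δ₁, S₁, A₁, h₁⟩ := ih
    letI := f₁
    refine ⟨σ₁ ⊕ (F → V), inferInstance,
      glue δ₁ (fun _ _ _ => False) (fun s β => s ∈ A₁ β) (fun β t => t ∈ S₁ β),
      fun α => {Sum.inr α}, fun α' => {Sum.inr α'}, ?_⟩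
    intro α α' w
    simp only [traces]
    constructor
    · rintro ⟨x, rfl, y, rfl, h⟩
      exact (glue_star_decomp (Rel := fun β w => ∃ n, w ∈ powTr (traces e) n β α')
        ⟨0, rfl, rfl⟩
        (by
          rintro β γ w₁ w₂ hm ⟨n, hw₂⟩
          refine ⟨n + 1, ?_⟩
          rw [powTr_succ']
          exact ⟨γ, w₁, (h₁ β γ w₁).mp hm, w₂, hw₂, rfl⟩)
        h rfl).1 α rfl
    · rintro ⟨n, hn⟩
      have claim : ∀ n (β : F → V) (w : List (Alph V)),
          w ∈ powTr (traces e) n β α' →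
          EReach (glue δ₁ (fun _ _ _ => False) (fun s β => s ∈ A₁ β)
            (fun β t => t ∈ S₁ β)) (Sum.inr β) w (Sum.inr α') := by
        intro n
        induction n with
        | zero =>
          rintro β w ⟨rfl, rfl⟩
          exact EReach.refl _
        | succ n ihn =>
          intro β w hw
          rw [powTr_succ'] at hw
          obtain ⟨γ, w₁, hw₁, w₂, hw₂, rfl⟩ := hw
          obtain ⟨s, hs, t, ht, p⟩ := (h₁ β γ w₁).mpr hw₁
          have e2 : EReach (glue δ₁ (fun _ _ _ => False) (fun s β => s ∈ A₁ β)
              (fun β t => t ∈ S₁ β)) (Sum.inl t) [] (Sum.inr γ) :=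
            EReach.eps (u := Sum.inr γ) ⟨rfl, ht⟩ (EReach.refl _)
          have p1 : EReach (glue δ₁ (fun _ _ _ => False) (fun s β => s ∈ A₁ β)
              (fun β t => t ∈ S₁ β)) (Sum.inl s) w₁ (Sum.inr γ) := by
            simpa using (glue_lift_inl p).trans e2
          exact EReach.eps (u := Sum.inl s) ⟨rfl, hs⟩ (p1.trans (ihn γ w₂ hw₂))
      exact ⟨Sum.inr α, rfl, Sum.inr α', rfl, claim n α w hn⟩

end StmtAux3

/-- For every full StacKAT expression `e` and headers `α₁, α₂`, the trace language
`traces_{α₁}^{α₂}(e)` is regular over the push-pop alphabet. -/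
theorem stmt14 {F V : Type} [Fintype F] [DecidableEq F] [Fintype V] [Nonempty V]
    (e : FExp F V) (α₁ α₂ : F → V) : (traces e α₁ α₂).IsRegular := by
  obtain ⟨σ, fin, δ, S, A, hM⟩ := exists_auto e
  letI := fin
  have hL : traces e α₁ α₂ = {w | ∃ s ∈ S α₁, ∃ t ∈ A α₂, EReach δ s w t} := by
    ext w
    exact (hM α₁ α₂ w).symm
  rw [hL]
  exact isRegular_of_eReach δ (S α₁) (A α₂)
end

section
/- For every full StacKAT expression e, its packet semantics decomposes through its trace languages: ⟦e⟧ = ⋃_{α₁, α₂ : F → V} [traces_{α₁}^{α₂}(e)]_{(α₁,α₂)}. -/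
lemma relPow_succ' {α : Type*} (r : α → α → Prop) (n : ℕ) (a b : α) :
    relPow r (n+1) a b ↔ Relation.Comp (relPow r n) r a b := by
  induction n generalizing a b with
  | zero =>
    simp only [relPow, Relation.Comp]
    constructor
    · rintro ⟨c, h, rfl⟩; exact ⟨a, rfl, h⟩
    · rintro ⟨c, rfl, h⟩; exact ⟨b, h, rfl⟩
  | succ n ih =>
    show Relation.Comp r (relPow r (n+1)) a b ↔ _
    constructor
    · rintro ⟨c, hac, h⟩
      obtain ⟨d, hd1, hd2⟩ := (ih c b).1 h
      exact ⟨d, ⟨c, hac, hd1⟩, hd2⟩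
    · rintro ⟨d, ⟨c, hac, hd1⟩, hd2⟩
      exact ⟨c, hac, (ih c b).2 ⟨d, hd1, hd2⟩⟩

/-- `⟦e⟧ = ⋃_{α₁,α₂} [traces_{α₁}^{α₂}(e)]_{(α₁,α₂)}`: the packet semantics of a full
StacKAT expression decomposes through its trace languages. -/
theorem stmt15 {F V : Type} [Fintype F] [DecidableEq F] [Fintype V] [Nonempty V]
    (e : FExp F V) :
    fdenote e = fun p q : Packet F V => ∃ x ∈ traces e p.1 q.1, wordRel x p.2 q.2 := by
  induction e with
  | zero => funext p q; simp [fdenote, traces]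
  | one =>
    funext ⟨pa, ps⟩ ⟨qa, qs⟩
    simp only [fdenote, traces, eq_iff_iff, Set.mem_setOf_eq, Prod.mk.injEq]
    constructor
    · rintro ⟨h1, h2⟩; exact ⟨[], ⟨rfl, h1⟩, h2⟩
    · rintro ⟨x, ⟨rfl, h⟩, h2⟩; exact ⟨h, h2⟩
  | test f v =>
    funext ⟨pa, ps⟩ ⟨qa, qs⟩
    simp only [fdenote, traces, eq_iff_iff, Set.mem_setOf_eq, Prod.mk.injEq]
    constructor
    · rintro ⟨⟨h1, h2⟩, hv⟩
      exact ⟨[], ⟨rfl, h1.symm, hv⟩, h2.symm⟩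
    · rintro ⟨x, ⟨rfl, h, hv⟩, h2⟩
      exact ⟨⟨h.symm, (show ps = qs from h2).symm⟩, hv⟩
  | assign f v =>
    funext ⟨pa, ps⟩ ⟨qa, qs⟩
    simp only [fdenote, traces, eq_iff_iff, Set.mem_setOf_eq, Prod.mk.injEq]
    constructor
    · rintro ⟨h1, h2⟩
      exact ⟨[], ⟨rfl, h1⟩, h2.symm⟩
    · rintro ⟨x, ⟨rfl, h⟩, h2⟩
      have h2' : ps = qs := h2
      exact ⟨h, h2'.symm⟩
  | push v =>
    funext ⟨pa, ps⟩ ⟨qa, qs⟩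
    simp only [fdenote, traces, eq_iff_iff, Set.mem_setOf_eq, Prod.mk.injEq]
    constructor
    · rintro ⟨h1, h2⟩
      exact ⟨[pushSym v], ⟨rfl, h1.symm⟩, v :: ps, rfl, h2.symm⟩
    · rintro ⟨x, ⟨rfl, h⟩, u, hu, h2⟩
      have hu' : u = v :: ps := hu
      have h2' : u = qs := h2
      exact ⟨h.symm, by rw [← h2', hu']⟩
  | pop v =>
    funext ⟨pa, ps⟩ ⟨qa, qs⟩
    simp only [fdenote, traces, eq_iff_iff, Set.mem_setOf_eq, Prod.mk.injEq]
    constructor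
    · rintro ⟨h1, h2⟩
      exact ⟨[popSym v], ⟨rfl, h1⟩, qs, h2, rfl⟩
    · rintro ⟨x, ⟨rfl, h⟩, u, hu, h2⟩
      have hu' : ps = v :: u := hu
      have h2' : u = qs := h2
      exact ⟨h, by rw [hu', h2']⟩
  | plus e₁ e₂ ih₁ ih₂ =>
    funext p q
    simp only [fdenote, ih₁, ih₂, traces, eq_iff_iff]
    constructor
    · rintro (⟨x, hx, hw⟩ | ⟨x, hx, hw⟩)
      · exact ⟨x, Or.inl hx, hw⟩
      · exact ⟨x, Or.inr hx, hw⟩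
    · rintro ⟨x, hx | hx, hw⟩
      · exact Or.inl ⟨x, hx, hw⟩
      · exact Or.inr ⟨x, hx, hw⟩
  | seq e₁ e₂ ih₁ ih₂ =>
    funext p q
    simp only [fdenote, ih₁, ih₂, traces, seqTr, eq_iff_iff, Relation.Comp,
      Set.mem_setOf_eq]
    constructor
    · rintro ⟨r, ⟨x, hx, hwx⟩, ⟨y, hy, hwy⟩⟩
      refine ⟨x ++ y, ⟨r.1, x, hx, y, hy, rfl⟩, ?_⟩
      exact (wordRel_append x y p.2 q.2).2 ⟨r.2, hwx, hwy⟩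
    · rintro ⟨w, ⟨β, x, hx, y, hy, rfl⟩, hw⟩
      obtain ⟨u, h1, h2⟩ := (wordRel_append x y p.2 q.2).1 hw
      exact ⟨(β, u), ⟨x, hx, h1⟩, ⟨y, hy, h2⟩⟩
  | star e ih =>
    have key : ∀ (n : ℕ) (p q : Packet F V),
        relPow (fdenote e) n p q ↔
          ∃ x ∈ powTr (traces e) n p.1 q.1, wordRel x p.2 q.2 := by
      intro n
      induction n with
      | zero =>
        rintro ⟨pa, ps⟩ ⟨qa, qs⟩
        simp only [relPow, powTr, Set.mem_setOf_eq, Prod.mk.injEq]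
        constructor
        · rintro ⟨h1, h2⟩; exact ⟨[], ⟨rfl, h1⟩, h2⟩
        · rintro ⟨x, ⟨rfl, h⟩, h2⟩
          exact ⟨h, h2⟩
      | succ n ihn =>
        intro p q
        rw [relPow_succ']
        simp only [Relation.Comp, powTr, seqTr, Set.mem_setOf_eq]
        constructor
        · rintro ⟨r, hr, he⟩
          rw [ih] at he
          obtain ⟨x, hx, hwx⟩ := he
          obtain ⟨y, hy, hwy⟩ := (ihn p r).1 hr
          refine ⟨y ++ x, ⟨r.1, y, hy, x, hx, rfl⟩, ?_⟩
          exact (wordRel_append y x p.2 q.2).2 ⟨r.2, hwy, hwx⟩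
        · rintro ⟨w, ⟨β, y, hy, x, hx, rfl⟩, hw⟩
          obtain ⟨u, h1, h2⟩ := (wordRel_append y x p.2 q.2).1 hw
          refine ⟨(β, u), (ihn p (β, u)).2 ⟨y, hy, h1⟩, ?_⟩
          rw [ih]
          exact ⟨x, hx, h2⟩
    funext p q
    simp only [fdenote, traces, eq_iff_iff, Set.mem_setOf_eq]
    constructor
    · rintro ⟨n, h⟩
      obtain ⟨x, hx, hw⟩ := (key n p q).1 h
      exact ⟨x, ⟨n, hx⟩, hw⟩
    · rintro ⟨x, ⟨n, hx⟩, hw⟩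
      exact ⟨n, (key n p q).2 ⟨x, hx, hw⟩⟩
end
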